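/- arXiv:2208.06907 — 3 statements merged into one kernel-verified Lean document; each statement's English description precedes it below -/
import Mathlib

section
/- For any finite set Y ⊆ 𝒳: if there is a voting method with domain {P : X(P) ⊆ Y} satisfying anonymity, neutrality, binary quasi-resoluteness, binary γ, and α-resoluteness, then there is a majoritarian voting method with domain {P : X(P) ⊆ Y} satisfying anonymity, neutrality, binary quasi-resoluteness, binary γ, and α-resoluteness. -/
/- Formalization of voting-theoretic notions from Holliday, Norman, Pacuit, Zahedian,
"Impossibility theorems involving weakenings of expansion consistency and resoluteness
in voting". Candidates form an infinite type `C` and voters an infinite type `V`. -/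

open Classical

noncomputable section

/-- `L` is a strict linear order on exactly the finite set `s`. -/
def IsStrictLinearOrderOn {C : Type} (s : Finset C) (L : C → C → Prop) : Prop :=
  (∀ x, ¬ L x x) ∧ (∀ x y z, L x y → L y z → L x z) ∧
    (∀ x ∈ s, ∀ y ∈ s, x ≠ y → L x y ∨ L y x) ∧ ∀ x y, L x y → x ∈ s ∧ y ∈ s

/-- Restriction of a relation to a finite set `A`. -/
def restrictRel {C : Type} (A : Finset C) (L : C → C → Prop) : C → C → Prop :=
  fun x y => L x y ∧ x ∈ A ∧ y ∈ A

theorem IsStrictLinearOrderOn.restrict {C : Type} {s A : Finset C} {L : C → C → Prop}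
    (h : IsStrictLinearOrderOn s L) (hA : A ⊆ s) :
    IsStrictLinearOrderOn A (restrictRel A L) := by
  obtain ⟨hirr, htr, htot, hdom⟩ := h
  refine ⟨fun x hx => hirr x hx.1,
    fun x y z hxy hyz => ⟨htr _ _ _ hxy.1 hyz.1, hxy.2.1, hyz.2.2⟩, ?_,
    fun x y hxy => ⟨hxy.2.1, hxy.2.2⟩⟩
  intro x hx y hy hne
  rcases htot x (hA hx) y (hA hy) hne with h' | h'
  · exact Or.inl ⟨h', hx, hy⟩
  · exact Or.inr ⟨h', hy, hx⟩

/-- The image of a relation under the transposition of `a` and `b`. -/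
def swapRel {C : Type} (a b : C) (L : C → C → Prop) : C → C → Prop :=
  fun x y => L (Equiv.swap a b x) (Equiv.swap a b y)

theorem IsStrictLinearOrderOn.swapRel_mem {C : Type} {s : Finset C} {L : C → C → Prop}
    (a b : C) (h : IsStrictLinearOrderOn s L) :
    IsStrictLinearOrderOn (s.image (Equiv.swap a b)) (swapRel a b L) := by
  obtain ⟨hirr, htr, htot, hdom⟩ := h
  refine ⟨fun x => hirr _, fun x y z hxy hyz => htr _ _ _ hxy hyz, ?_, ?_⟩
  · intro x hx y hy hne
    obtain ⟨x', hx', rfl⟩ := Finset.mem_image.mp hx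
    obtain ⟨y', hy', rfl⟩ := Finset.mem_image.mp hy
    have hne' : x' ≠ y' := by rintro rfl; exact hne rfl
    have := htot x' hx' y' hy' hne'
    simpa [swapRel, Equiv.swap_apply_self] using this
  · intro x y hxy
    obtain ⟨h1, h2⟩ := hdom _ _ hxy
    exact ⟨Finset.mem_image.mpr ⟨_, h1, Equiv.swap_apply_self a b x⟩,
      Finset.mem_image.mpr ⟨_, h2, Equiv.swap_apply_self a b y⟩⟩

/-- A preference profile: each voter in the finite set `voters` submits a strict linear
order of the finite nonempty set `cands` of candidates. -/
structure Profile (C V : Type) where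
  voters : Finset V
  cands : Finset C
  cands_nonempty : cands.Nonempty
  ballot : V → C → C → Prop
  ballot_lin : ∀ i ∈ voters, IsStrictLinearOrderOn cands (ballot i)

namespace Profile

variable {C V : Type}

/-- The margin of `x` over `y` in `P`: the number of voters ranking `x` above `y`
minus the number of voters ranking `y` above `x`. -/
def margin (P : Profile C V) (x y : C) : ℤ :=
  ((P.voters.filter (fun i => P.ballot i x y)).card : ℤ) -
    ((P.voters.filter (fun i => P.ballot i y x)).card : ℤ)

/-- The profile `P^{i⇄j}` obtained by transposing the voters `i` and `j`. -/
def swapVoters (P : Profile C V) (i j : V) : Profile C V where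
  voters := P.voters.image (Equiv.swap i j)
  cands := P.cands
  cands_nonempty := P.cands_nonempty
  ballot := fun k => P.ballot (Equiv.swap i j k)
  ballot_lin := by
    intro k hk
    obtain ⟨m, hm, rfl⟩ := Finset.mem_image.mp hk
    simpa [Equiv.swap_apply_self] using P.ballot_lin m hm

/-- The profile `P_{a⇄b}` obtained by transposing the candidates `a` and `b`. -/
def swapCands (P : Profile C V) (a b : C) : Profile C V where
  voters := P.voters
  cands := P.cands.image (Equiv.swap a b)
  cands_nonempty := P.cands_nonempty.image _
  ballot := fun i => swapRel a b (P.ballot i)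
  ballot_lin := fun i hi => (P.ballot_lin i hi).swapRel_mem a b

/-- The restriction `P|_A` of a profile to a nonempty subset `A` of its candidates. -/
def restrict (P : Profile C V) (A : Finset C) (hA : A.Nonempty) (hsub : A ⊆ P.cands) :
    Profile C V where
  voters := P.voters
  cands := A
  cands_nonempty := hA
  ballot := fun i => restrictRel A (P.ballot i)
  ballot_lin := fun i hi => (P.ballot_lin i hi).restrict hsub

/-- The profile `P_{-y}`, i.e. `P` with the candidate `y` removed. -/
def minus (P : Profile C V) (y : C) (h : (P.cands.erase y).Nonempty) : Profile C V :=
  P.restrict (P.cands.erase y) h (P.cands.erase_subset y)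

/-- The profile `P|_{{x,y}}`, i.e. `P` restricted to the two candidates `x` and `y`. -/
def pair (P : Profile C V) (x y : C) (hx : x ∈ P.cands) (hy : y ∈ P.cands) : Profile C V :=
  P.restrict {x, y} ⟨x, Finset.mem_insert_self x {y}⟩
    (by
      intro z hz
      rcases Finset.mem_insert.mp hz with rfl | hz
      · exact hx
      · rcases Finset.mem_singleton.mp hz with rfl
        exact hy)

/-- `P` is uniquely weighted: no two distinct ordered pairs of distinct candidates
have the same margin. -/
def UniquelyWeighted (P : Profile C V) : Prop :=
  ∀ a ∈ P.cands, ∀ b ∈ P.cands, ∀ x ∈ P.cands, ∀ y ∈ P.cands,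
    a ≠ b → x ≠ y → (a, b) ≠ (x, y) → P.margin a b ≠ P.margin x y

/-- `P` is uniquely ranked: in every subelection with at least two candidates, no two
candidates have the same number of `n`-th place votes, and no two candidates have the
same Borda score. -/
def UniquelyRanked (P : Profile C V) : Prop :=
  ∀ Y ⊆ P.cands, 2 ≤ Y.card →
    ((∀ n : ℕ, 1 ≤ n → n ≤ Y.card → ∀ x ∈ Y, ∀ y ∈ Y, x ≠ y →
        (P.voters.filter
            (fun i => (Y.filter (fun z => P.ballot i z x)).card = n - 1)).card ≠
          (P.voters.filter
            (fun i => (Y.filter (fun z => P.ballot i z y)).card = n - 1)).card) ∧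
      (∀ x ∈ Y, ∀ y ∈ Y, x ≠ y →
        (∑ i ∈ P.voters, (Y.filter (fun z => P.ballot i x z)).card) ≠
          ∑ i ∈ P.voters, (Y.filter (fun z => P.ballot i y z)).card))

/-- `Q` is an `n`-fold copy `nP` of `P`: same candidates, and there is a map sending
the voters of `Q` onto the voters of `P` such that each voter of `P` has exactly `n`
preimages, each with the same ballot. -/
def IsCopy (Q P : Profile C V) (n : ℕ) : Prop :=
  Q.cands = P.cands ∧
    ∃ h : V → V,
      (∀ j ∈ Q.voters, h j ∈ P.voters) ∧
      (∀ i ∈ P.voters, (Q.voters.filter (fun j => h j = i)).card = n) ∧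
      (∀ j ∈ Q.voters, Q.ballot j = P.ballot (h j))

/-- `Q` is obtained from `P` by deleting one voter with each linear order of the
candidates of `P`. -/
def IsCancelOf (Q P : Profile C V) : Prop :=
  Q.cands = P.cands ∧ Q.voters ⊆ P.voters ∧
    (∀ j ∈ Q.voters, Q.ballot j = P.ballot j) ∧
    ∀ L : C → C → Prop, IsStrictLinearOrderOn P.cands L →
      ((P.voters \ Q.voters).filter (fun i => P.ballot i = L)).card = 1

end Profile

/-- A voting method: a function assigning to each profile in a nonempty domain a
nonempty set of winners among its candidates. -/
structure VotingMethod (C V : Type) where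
  dom : Set (Profile C V)
  dom_nonempty : dom.Nonempty
  winners : Profile C V → Finset C
  winners_nonempty : ∀ P ∈ dom, (winners P).Nonempty
  winners_sub : ∀ P ∈ dom, winners P ⊆ P.cands

namespace VotingMethod

variable {C V : Type}

/-- Anonymity: transposing two voters does not change the winners. -/
def Anonymous (F : VotingMethod C V) : Prop :=
  ∀ P ∈ F.dom, ∀ i j : V, P.swapVoters i j ∈ F.dom →
    F.winners (P.swapVoters i j) = F.winners P

/-- Neutrality: transposing two candidates transposes the winners accordingly. -/
def Neutral (F : VotingMethod C V) : Prop :=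
  ∀ P ∈ F.dom, ∀ a b : C, P.swapCands a b ∈ F.dom →
    F.winners (P.swapCands a b) = (F.winners P).image (Equiv.swap a b)

/-- Binary resoluteness: a unique winner in any two-candidate profile. -/
def BinaryResolute (F : VotingMethod C V) : Prop :=
  ∀ P ∈ F.dom, P.cands.card = 2 → (F.winners P).card = 1

/-- Binary quasi-resoluteness: a unique winner in any two-candidate profile whose
two distinct candidates have a nonzero margin between them. -/
def BinaryQuasiResolute (F : VotingMethod C V) : Prop :=
  ∀ P ∈ F.dom, P.cands.card = 2 →
    (∀ x ∈ P.cands, ∀ y ∈ P.cands, x ≠ y → P.margin x y ≠ 0) →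
    (F.winners P).card = 1

/-- Quasi-resoluteness: a unique winner in any uniquely weighted profile. -/
def QuasiResolute (F : VotingMethod C V) : Prop :=
  ∀ P ∈ F.dom, P.UniquelyWeighted → (F.winners P).card = 1

/-- Weak quasi-resoluteness: a unique winner in any profile that is both uniquely
weighted and uniquely ranked. -/
def WeakQuasiResolute (F : VotingMethod C V) : Prop :=
  ∀ P ∈ F.dom, P.UniquelyWeighted → P.UniquelyRanked → (F.winners P).card = 1

/-- Binary γ: if `x` wins without `y` and wins the head-to-head against `y`,
then `x` wins with `y` included. -/
def BinaryGamma (F : VotingMethod C V) : Prop :=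
  ∀ P ∈ F.dom, ∀ x, ∀ hx : x ∈ P.cands, ∀ y, ∀ hy : y ∈ P.cands, x ≠ y →
    ∀ h : (P.cands.erase y).Nonempty,
      P.minus y h ∈ F.dom → P.pair x y hx hy ∈ F.dom →
      x ∈ F.winners (P.minus y h) → F.winners (P.pair x y hx hy) = {x} →
      x ∈ F.winners P

/-- α-resoluteness: if `x` wins without `y` and wins the head-to-head against `y`,
then adding `y` does not enlarge the set of winners. -/
def AlphaResolute (F : VotingMethod C V) : Prop :=
  ∀ P ∈ F.dom, ∀ x, ∀ hx : x ∈ P.cands, ∀ y, ∀ hy : y ∈ P.cands, x ≠ y →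
    ∀ h : (P.cands.erase y).Nonempty,
      P.minus y h ∈ F.dom → P.pair x y hx hy ∈ F.dom →
      x ∈ F.winners (P.minus y h) → F.winners (P.pair x y hx hy) = {x} →
      (F.winners P).card ≤ (F.winners (P.minus y h)).card

/-- Homogeneity: replacing each voter by `n` copies of that voter does not change
the winners. -/
def Homogeneous (F : VotingMethod C V) : Prop :=
  ∀ P ∈ F.dom, ∀ Q ∈ F.dom, ∀ n : ℕ, 0 < n → Q.IsCopy P n → F.winners Q = F.winners P

/-- Cancellativity: deleting one voter with each linear order of the candidates does
not change the winners. -/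
def Cancellative (F : VotingMethod C V) : Prop :=
  ∀ P ∈ F.dom, ∀ Q ∈ F.dom, Q.IsCancelOf P → F.winners Q = F.winners P

/-- Majoritarianism: the winners depend only on the majority graph of the profile. -/
def Majoritarian (F : VotingMethod C V) : Prop :=
  ∀ P ∈ F.dom, ∀ P' ∈ F.dom, P.cands = P'.cands →
    (∀ x ∈ P.cands, ∀ y ∈ P.cands, (0 < P.margin x y ↔ 0 < P'.margin x y)) →
    F.winners P = F.winners P'

/-- Pairwiseness: the winners depend only on the margin graph of the profile. -/
def Pairwise (F : VotingMethod C V) : Prop :=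
  ∀ P ∈ F.dom, ∀ P' ∈ F.dom, P.cands = P'.cands →
    (∀ x ∈ P.cands, ∀ y ∈ P.cands, P.margin x y = P'.margin x y) →
    F.winners P = F.winners P'

end VotingMethod

/-! ### Auxiliary machinery for the proof of `majoritarian_transfer` -/

open scoped Classical

namespace MajTransfer

variable {C V : Type}

theorem Profile.ext' {P Q : Profile C V} (hv : P.voters = Q.voters)
    (hc : P.cands = Q.cands) (hb : P.ballot = Q.ballot) : P = Q := by
  cases P; cases Q
  cases hv; cases hc; cases hb
  rfl

theorem restrictRel_restrictRel {A X : Finset C} (hAX : A ⊆ X) (L : C → C → Prop) :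
    restrictRel A (restrictRel X L) = restrictRel A L := by
  funext x y; apply propext
  constructor
  · rintro ⟨⟨h, _, _⟩, hx, hy⟩; exact ⟨h, hx, hy⟩
  · rintro ⟨h, hx, hy⟩; exact ⟨⟨h, hAX hx, hAX hy⟩, hx, hy⟩

theorem restrictRel_bot (A : Finset C) :
    restrictRel A (fun _ _ => False) = (fun (_ _ : C) => False) := by
  funext x y; apply propext; simp [restrictRel]

theorem swapRel_bot (a b : C) :
    swapRel a b (fun _ _ => False) = (fun (_ _ : C) => False) := by
  funext x y; apply propext; simp [swapRel]

theorem margin_self (P : Profile C V) (x : C) : P.margin x x = 0 := by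
  simp [Profile.margin]

theorem margin_antisymm (P : Profile C V) (x y : C) : P.margin x y = - P.margin y x := by
  simp only [Profile.margin]; ring

theorem margin_restrict (P : Profile C V) (A : Finset C) (hA : A.Nonempty)
    (hsub : A ⊆ P.cands) {x y : C} (hx : x ∈ A) (hy : y ∈ A) :
    (P.restrict A hA hsub).margin x y = P.margin x y := by
  have key : ∀ u v : C, u ∈ A → v ∈ A →
      ((P.restrict A hA hsub).voters.filter
        (fun i => (P.restrict A hA hsub).ballot i u v)).card
        = (P.voters.filter (fun i => P.ballot i u v)).card := by
    intro u v hu hv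
    have : (P.restrict A hA hsub).voters = P.voters := rfl
    rw [this]
    congr 1
    apply Finset.filter_congr
    intro i _
    show restrictRel A (P.ballot i) u v ↔ P.ballot i u v
    exact ⟨fun h => h.1, fun h => ⟨h, hu, hv⟩⟩
  simp only [Profile.margin, key x y hx hy, key y x hy hx]

theorem margin_swapVoters (P : Profile C V) (i j : V) (x y : C) :
    (P.swapVoters i j).margin x y = P.margin x y := by
  have key : ∀ u v : C,
      ((P.swapVoters i j).voters.filter (fun k => (P.swapVoters i j).ballot k u v)).card
        = (P.voters.filter (fun k => P.ballot k u v)).card := by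
    intro u v
    show ((P.voters.image (Equiv.swap i j)).filter
      (fun k => P.ballot (Equiv.swap i j k) u v)).card = _
    rw [Finset.filter_image]
    rw [Finset.card_image_of_injective _ (Equiv.swap i j).injective]
    congr 1
    apply Finset.filter_congr
    intro k _
    rw [Equiv.swap_apply_self]
  simp only [Profile.margin, key x y, key y x]

theorem margin_swapCands (P : Profile C V) (a b : C) (x y : C) :
    (P.swapCands a b).margin x y = P.margin (Equiv.swap a b x) (Equiv.swap a b y) := by
  have key : ∀ u v : C,
      ((P.swapCands a b).voters.filter (fun k => (P.swapCands a b).ballot k u v)).card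
        = (P.voters.filter
            (fun k => P.ballot k (Equiv.swap a b u) (Equiv.swap a b v))).card := by
    intro u v
    show (P.voters.filter (fun k => swapRel a b (P.ballot k) u v)).card = _
    congr 1
  simp only [Profile.margin, key x y, key y x]

/-- The positive-margin relation (supported on the candidates) of a profile. -/
def Epred (P : Profile C V) : C → C → Prop :=
  fun u v => u ∈ P.cands ∧ v ∈ P.cands ∧ 0 < P.margin u v

theorem Epred_restrict (P : Profile C V) (A : Finset C) (hA : A.Nonempty)
    (hsub : A ⊆ P.cands) :
    Epred (P.restrict A hA hsub) = fun u v => u ∈ A ∧ v ∈ A ∧ Epred P u v := by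
  funext u v; apply propext
  constructor
  · rintro ⟨hu, hv, hm⟩
    have hu' : u ∈ A := hu
    have hv' : v ∈ A := hv
    rw [margin_restrict P A hA hsub hu' hv'] at hm
    exact ⟨hu', hv', hsub hu', hsub hv', hm⟩
  · rintro ⟨hu, hv, _, _, hm⟩
    exact ⟨hu, hv, by rw [margin_restrict P A hA hsub hu hv]; exact hm⟩

theorem Epred_swapVoters (P : Profile C V) (i j : V) :
    Epred (P.swapVoters i j) = Epred P := by
  funext u v
  simp only [Epred, margin_swapVoters]
  rfl

theorem Epred_swapCands (P : Profile C V) (a b : C) :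
    Epred (P.swapCands a b) =
      fun u v => Epred P (Equiv.swap a b u) (Equiv.swap a b v) := by
  funext u v; apply propext
  have hmem : ∀ w : C, w ∈ P.cands.image (Equiv.swap a b) ↔ Equiv.swap a b w ∈ P.cands := by
    intro w
    constructor
    · rintro hw
      rcases Finset.mem_image.mp hw with ⟨z, hz, rfl⟩
      rwa [Equiv.swap_apply_self]
    · intro hw
      exact Finset.mem_image.mpr ⟨_, hw, Equiv.swap_apply_self a b w⟩
  constructor
  · rintro ⟨hu, hv, hm⟩
    rw [margin_swapCands] at hm
    exact ⟨(hmem u).mp hu, (hmem v).mp hv, hm⟩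
  · rintro ⟨hu, hv, hm⟩
    exact ⟨(hmem u).mpr hu, (hmem v).mpr hv, by rw [margin_swapCands]; exact hm⟩

section Main

variable [Infinite V] {Y : Finset C}

/-- Index type for the voters of the canonical profiles: an enumeration of `Y`
together with an adjacent position. -/
abbrev Idx (Y : Finset C) : Type := (Fin Y.card ≃ {x : C // x ∈ Y}) × Fin (Y.card - 1)

/-- A fixed embedding of the voter indices into the voter type. -/
noncomputable def iv (Y : Finset C) : Idx Y → V :=
  fun i => (Infinite.natEmbedding V) ((Fintype.equivFin (Idx Y)) i).1

theorem iv_inj : Function.Injective (iv (V := V) Y) := by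
  intro i j h
  have h2 := (Infinite.natEmbedding V).injective h
  have h3 := Fin.val_injective h2
  exact (Fintype.equivFin (Idx Y)).injective h3

/-- Position of `k` in `Fin Y.card`. -/
def kcPos (k : Fin (Y.card - 1)) : Fin Y.card := ⟨k.1, by have := k.isLt; omega⟩

/-- Position of `k+1` in `Fin Y.card`. -/
def ksPos (k : Fin (Y.card - 1)) : Fin Y.card := ⟨k.1 + 1, by have := k.isLt; omega⟩

/-- The strict order on `Y` induced by an enumeration. -/
def ord (f : Fin Y.card ≃ {x : C // x ∈ Y}) : C → C → Prop :=
  fun u v => ∃ (hu : u ∈ Y) (hv : v ∈ Y), (f.symm ⟨u, hu⟩).1 < (f.symm ⟨v, hv⟩).1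

theorem ord_asymm {f : Fin Y.card ≃ {x : C // x ∈ Y}} {u v : C}
    (h1 : ord f u v) (h2 : ord f v u) : False := by
  obtain ⟨hu, hv, hlt⟩ := h1
  obtain ⟨hv', hu', hlt'⟩ := h2
  exact absurd hlt' (not_lt_of_gt hlt)

theorem ord_lin (f : Fin Y.card ≃ {x : C // x ∈ Y}) : IsStrictLinearOrderOn Y (ord f) := by
  refine ⟨?_, ?_, ?_, ?_⟩
  · rintro x ⟨hx, hx', h⟩; exact lt_irrefl _ h
  · rintro x y z ⟨hx, hy, h1⟩ ⟨hy', hz, h2⟩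
    exact ⟨hx, hz, lt_trans h1 h2⟩
  · intro x hx y hy hne
    rcases lt_trichotomy ((f.symm ⟨x, hx⟩).1) ((f.symm ⟨y, hy⟩).1) with h | h | h
    · exact Or.inl ⟨hx, hy, h⟩
    · exfalso
      apply hne
      have : f.symm ⟨x, hx⟩ = f.symm ⟨y, hy⟩ := Fin.ext h
      have := f.symm.injective this
      exact congrArg Subtype.val this
    · exact Or.inr ⟨hy, hx, h⟩
  · rintro x y ⟨hx, hy, _⟩; exact ⟨hx, hy⟩

/-- The enumeration used by voter `i` of the canonical profile for edge relation `E`: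
the base enumeration `i.1`, with the adjacent pair at position `i.2` transposed
if `E` directs it against the base enumeration. -/
def fFor (E : C → C → Prop) (i : Idx Y) : Fin Y.card ≃ {x : C // x ∈ Y} :=
  if E (i.1 (ksPos i.2)).1 (i.1 (kcPos i.2)).1 then
    (Equiv.swap (kcPos i.2) (ksPos i.2)).trans i.1
  else i.1

/-- The ballot of voter `i` of the canonical profile. -/
def balFor (X : Finset C) (E : C → C → Prop) (i : Idx Y) : C → C → Prop :=
  restrictRel X (ord (fFor E i))

/-- The ballot function of `Phi`. -/
noncomputable def PhiBallot (bal : Idx Y → C → C → Prop) : V → C → C → Prop :=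
  fun v => if h : ∃ i : Idx Y, iv Y i = v then bal h.choose else fun _ _ => False

theorem PhiBallot_iv (bal : Idx Y → C → C → Prop) (i : Idx Y) :
    PhiBallot (V := V) bal (iv Y i) = bal i := by
  have h : ∃ j : Idx Y, iv (V := V) Y j = iv Y i := ⟨i, rfl⟩
  unfold PhiBallot
  rw [dif_pos h]
  exact congrArg bal (iv_inj h.choose_spec)

theorem PhiBallot_off {bal : Idx Y → C → C → Prop} {v : V}
    (h : ¬ ∃ i : Idx Y, iv Y i = v) :
    PhiBallot (V := V) bal v = fun _ _ => False := by
  unfold PhiBallot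
  rw [dif_neg h]

/-- Building a profile from indexed ballots. -/
noncomputable def Phi (Y : Finset C) (X : Finset C) (hne : X.Nonempty)
    (bal : Idx Y → C → C → Prop)
    (hbal : ∀ i, IsStrictLinearOrderOn X (bal i)) : Profile C V where
  voters := Finset.image (iv Y) Finset.univ
  cands := X
  cands_nonempty := hne
  ballot := PhiBallot bal
  ballot_lin := by
    intro v hv
    rcases Finset.mem_image.mp hv with ⟨i, _, rfl⟩
    unfold PhiBallot
    rw [dif_pos ⟨i, rfl⟩]
    exact hbal _

theorem Phi_ballot_iv {X : Finset C} {hne : X.Nonempty} {bal : Idx Y → C → C → Prop}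
    {hbal : ∀ i, IsStrictLinearOrderOn X (bal i)} (i : Idx Y) :
    (Phi Y X hne bal hbal : Profile C V).ballot (iv Y i) = bal i :=
  PhiBallot_iv bal i

theorem Phi_congr {X : Finset C} {hne hne' : X.Nonempty} {bal bal' : Idx Y → C → C → Prop}
    {hbal : ∀ i, IsStrictLinearOrderOn X (bal i)}
    {hbal' : ∀ i, IsStrictLinearOrderOn X (bal' i)} (h : bal = bal') :
    (Phi Y X hne bal hbal : Profile C V) = Phi Y X hne' bal' hbal' := by
  subst h; rfl

/-- The canonical profile on candidates `X ⊆ Y` with edge relation `E`. -/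
noncomputable def Pi0 (Y : Finset C) (X : Finset C) (hne : X.Nonempty)
    (hXY : X ⊆ Y) (E : C → C → Prop) : Profile C V :=
  Phi Y X hne (balFor X E) (fun i => (ord_lin (fFor E i)).restrict hXY)

theorem Pi0_congr {X X' : Finset C} {hne : X.Nonempty} {hne' : X'.Nonempty}
    {hXY : X ⊆ Y} {hXY' : X' ⊆ Y} {E E' : C → C → Prop}
    (hX : X = X') (hE : E = E') :
    (Pi0 Y X hne hXY E : Profile C V) = Pi0 Y X' hne' hXY' E' := by
  subst hX; subst hE; rfl


theorem swap_val_lt {m : ℕ} (kc ks p q : Fin m) (hk : (ks : ℕ) = (kc : ℕ) + 1)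
    (h1 : ¬(p = kc ∧ q = ks)) (h2 : ¬(q = kc ∧ p = ks)) :
    ((Equiv.swap kc ks p : Fin m) : ℕ) < ((Equiv.swap kc ks q : Fin m) : ℕ) ↔
      (p : ℕ) < (q : ℕ) := by
  have hswap : ∀ r : Fin m, ((Equiv.swap kc ks r : Fin m) : ℕ)
      = if r = kc then (ks : ℕ) else if r = ks then (kc : ℕ) else (r : ℕ) := by
    intro r
    rcases eq_or_ne r kc with rfl | hrkc
    · simp [Equiv.swap_apply_left]
    · rcases eq_or_ne r ks with rfl | hrks
      · simp [Equiv.swap_apply_right, hrkc]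
      · simp [Equiv.swap_apply_of_ne_of_ne hrkc hrks, hrkc, hrks]
  rw [hswap p, hswap q]
  have e1 : (p = kc) ↔ (p : ℕ) = (kc : ℕ) := ⟨fun h => by rw [h], fun h => Fin.ext h⟩
  have e2 : (p = ks) ↔ (p : ℕ) = (ks : ℕ) := ⟨fun h => by rw [h], fun h => Fin.ext h⟩
  have e3 : (q = kc) ↔ (q : ℕ) = (kc : ℕ) := ⟨fun h => by rw [h], fun h => Fin.ext h⟩
  have e4 : (q = ks) ↔ (q : ℕ) = (ks : ℕ) := ⟨fun h => by rw [h], fun h => Fin.ext h⟩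
  rw [e1, e2] at *
  rw [e3, e4] at *
  split_ifs with a1 a2 a3 a4 a5 a6 <;> omega

theorem ord_swapPos (f : Fin Y.card ≃ {x : C // x ∈ Y}) (k : Fin (Y.card - 1)) (u v : C)
    (h1 : ¬(u = (f (kcPos k)).1 ∧ v = (f (ksPos k)).1))
    (h2 : ¬(v = (f (kcPos k)).1 ∧ u = (f (ksPos k)).1)) :
    ord ((Equiv.swap (kcPos k) (ksPos k)).trans f) u v ↔ ord f u v := by
  unfold ord
  constructor
  · rintro ⟨hu, hv, hlt⟩
    refine ⟨hu, hv, ?_⟩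
    have hs : ∀ (w : C) (hw : w ∈ Y),
        ((Equiv.swap (kcPos k) (ksPos k)).trans f).symm ⟨w, hw⟩
          = Equiv.swap (kcPos k) (ksPos k) (f.symm ⟨w, hw⟩) := by
      intro w hw; rfl
    rw [hs u hu, hs v hv] at hlt
    rw [← swap_val_lt (kcPos k) (ksPos k) (f.symm ⟨u, hu⟩) (f.symm ⟨v, hv⟩) rfl ?_ ?_]
    · exact hlt
    · rintro ⟨hp, hq⟩
      apply h1
      constructor
      · have := congrArg f hp
        rw [Equiv.apply_symm_apply] at this
        exact congrArg Subtype.val this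
      · have := congrArg f hq
        rw [Equiv.apply_symm_apply] at this
        exact congrArg Subtype.val this
    · rintro ⟨hp, hq⟩
      apply h2
      constructor
      · have := congrArg f hp
        rw [Equiv.apply_symm_apply] at this
        exact congrArg Subtype.val this
      · have := congrArg f hq
        rw [Equiv.apply_symm_apply] at this
        exact congrArg Subtype.val this
  · rintro ⟨hu, hv, hlt⟩
    refine ⟨hu, hv, ?_⟩
    have hs : ∀ (w : C) (hw : w ∈ Y),
        ((Equiv.swap (kcPos k) (ksPos k)).trans f).symm ⟨w, hw⟩
          = Equiv.swap (kcPos k) (ksPos k) (f.symm ⟨w, hw⟩) := by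
      intro w hw; rfl
    rw [hs u hu, hs v hv]
    rw [swap_val_lt (kcPos k) (ksPos k) (f.symm ⟨u, hu⟩) (f.symm ⟨v, hv⟩) rfl ?_ ?_]
    · exact hlt
    · rintro ⟨hp, hq⟩
      apply h1
      constructor
      · have := congrArg f hp
        rw [Equiv.apply_symm_apply] at this
        exact congrArg Subtype.val this
      · have := congrArg f hq
        rw [Equiv.apply_symm_apply] at this
        exact congrArg Subtype.val this
    · rintro ⟨hp, hq⟩
      apply h2
      constructor
      · have := congrArg f hp
        rw [Equiv.apply_symm_apply] at this
        exact congrArg Subtype.val this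
      · have := congrArg f hq
        rw [Equiv.apply_symm_apply] at this
        exact congrArg Subtype.val this

/-- Restriction compatibility of the canonical profiles. -/
theorem Pi0_restrict (X A : Finset C) (hA : A.Nonempty) (hX : X.Nonempty) (hXY : X ⊆ Y)
    (hAX : A ⊆ X) (E : C → C → Prop) (hsub : A ⊆ (Pi0 Y X hX hXY E : Profile C V).cands) :
    (Pi0 Y A hA (hAX.trans hXY) (fun u v => u ∈ A ∧ v ∈ A ∧ E u v) : Profile C V)
      = (Pi0 Y X hX hXY E : Profile C V).restrict A hA hsub := by
  refine Profile.ext' rfl rfl ?_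
  funext v
  show PhiBallot (V := V) (balFor A (fun u v => u ∈ A ∧ v ∈ A ∧ E u v)) v
      = restrictRel A (PhiBallot (balFor X E) v)
  by_cases h : ∃ i : Idx Y, iv (V := V) Y i = v
  · rcases h with ⟨i, rfl⟩
    rw [PhiBallot_iv, PhiBallot_iv]
    unfold balFor
    rw [restrictRel_restrictRel hAX]
    set a := (i.1 (kcPos i.2)).1 with ha
    set b := (i.1 (ksPos i.2)).1 with hb
    by_cases hE : E b a
    · by_cases hA2 : b ∈ A ∧ a ∈ A
      · have h1 : fFor (fun u v => u ∈ A ∧ v ∈ A ∧ E u v) i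
            = (Equiv.swap (kcPos i.2) (ksPos i.2)).trans i.1 := by
          unfold fFor
          rw [if_pos ⟨hA2.1, hA2.2, hE⟩]
        have h2 : fFor E i = (Equiv.swap (kcPos i.2) (ksPos i.2)).trans i.1 := by
          unfold fFor
          rw [if_pos hE]
        rw [h1, h2]
      · have h1 : fFor (fun u v => u ∈ A ∧ v ∈ A ∧ E u v) i = i.1 := by
          unfold fFor
          rw [if_neg]
          rintro ⟨hbA, haA, _⟩
          exact hA2 ⟨hbA, haA⟩
        have h2 : fFor E i = (Equiv.swap (kcPos i.2) (ksPos i.2)).trans i.1 := by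
          unfold fFor
          rw [if_pos hE]
        rw [h1, h2]
        funext u w
        apply propext
        constructor
        · rintro ⟨ho, hu, hw⟩
          refine ⟨?_, hu, hw⟩
          rw [ord_swapPos i.1 i.2 u w ?_ ?_]
          · exact ho
          · rintro ⟨rfl, rfl⟩
            exact hA2 ⟨hw, hu⟩
          · rintro ⟨rfl, rfl⟩
            exact hA2 ⟨hu, hw⟩
        · rintro ⟨ho, hu, hw⟩
          refine ⟨?_, hu, hw⟩
          rw [← ord_swapPos i.1 i.2 u w ?_ ?_]
          · exact ho
          · rintro ⟨rfl, rfl⟩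
            exact hA2 ⟨hw, hu⟩
          · rintro ⟨rfl, rfl⟩
            exact hA2 ⟨hu, hw⟩
    · have h1 : fFor (fun u v => u ∈ A ∧ v ∈ A ∧ E u v) i = i.1 := by
        unfold fFor
        rw [if_neg]
        rintro ⟨_, _, hE'⟩
        exact hE hE'
      have h2 : fFor E i = i.1 := by
        unfold fFor
        rw [if_neg hE]
      rw [h1, h2]
  · rw [PhiBallot_off h, PhiBallot_off h, restrictRel_bot]

set_option maxHeartbeats 1000000 in
theorem Phi_swapVoters (X : Finset C) (hne : X.Nonempty) (bal : Idx Y → C → C → Prop)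
    (hbal : ∀ i, IsStrictLinearOrderOn X (bal i)) (u w : Idx Y)
    (hbal' : ∀ i, IsStrictLinearOrderOn X (bal (Equiv.swap u w i))) :
    (Phi Y X hne bal hbal : Profile C V).swapVoters (iv Y u) (iv Y w)
      = Phi Y X hne (fun i => bal (Equiv.swap u w i)) hbal' := by
  refine Profile.ext' ?_ rfl ?_
  · show (Finset.image (iv (V := V) Y) Finset.univ).image (Equiv.swap (iv Y u) (iv Y w))
      = Finset.image (iv Y) Finset.univ
    rw [Finset.image_image]
    have hcomp : (⇑(Equiv.swap (iv (V := V) Y u) (iv Y w)) ∘ iv Y)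
        = iv Y ∘ ⇑(Equiv.swap u w) := by
      funext i
      exact iv_inj.swap_apply u w i
    rw [hcomp, ← Finset.image_image, Finset.image_univ_equiv]
  · funext v
    show PhiBallot (V := V) bal (Equiv.swap (iv Y u) (iv Y w) v)
        = PhiBallot (fun i => bal (Equiv.swap u w i)) v
    by_cases h : ∃ i : Idx Y, iv (V := V) Y i = v
    · rcases h with ⟨i, rfl⟩
      rw [iv_inj.swap_apply u w i, PhiBallot_iv, PhiBallot_iv]
    · have hvu : v ≠ iv Y u := by rintro rfl; exact h ⟨u, rfl⟩
      have hvw : v ≠ iv Y w := by rintro rfl; exact h ⟨w, rfl⟩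
      rw [Equiv.swap_apply_of_ne_of_ne hvu hvw, PhiBallot_off h, PhiBallot_off h]

/-- Anonymity of `F` implies invariance of winners under permuting the indexed ballots. -/
theorem winners_Phi_perm (F : VotingMethod C V)
    (hdom : F.dom = {P : Profile C V | P.cands ⊆ Y}) (hanon : F.Anonymous)
    (X : Finset C) (hne : X.Nonempty) (hXY : X ⊆ Y) (π : Equiv.Perm (Idx Y))
    (bal : Idx Y → C → C → Prop) (hbal : ∀ i, IsStrictLinearOrderOn X (bal i))
    (hbal2 : ∀ i, IsStrictLinearOrderOn X (bal (π i))) :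
    F.winners (Phi Y X hne (fun i => bal (π i)) hbal2)
      = F.winners (Phi Y X hne bal hbal) := by
  have key : ∀ π : Equiv.Perm (Idx Y), ∀ (bal : Idx Y → C → C → Prop)
      (hbal : ∀ i, IsStrictLinearOrderOn X (bal i))
      (hbal2 : ∀ i, IsStrictLinearOrderOn X (bal (π i))),
      F.winners (Phi Y X hne (fun i => bal (π i)) hbal2)
        = F.winners (Phi Y X hne bal hbal) := by
    intro π
    refine Equiv.Perm.swap_induction_on π ?_ ?_
    · intro bal hbal hbal2
      exact congrArg F.winners (Phi_congr (funext fun i => by simp))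
    · intro π' u w hne' ih
      intro bal hbal hbal2
      have hstep1 : (fun i => bal ((Equiv.swap u w * π') i))
          = fun i => (fun j => bal (Equiv.swap u w j)) (π' i) := by
        funext i
        simp [Equiv.Perm.mul_apply]
      have hbx : ∀ i, IsStrictLinearOrderOn X ((fun j => bal (Equiv.swap u w j)) (π' i)) := by
        intro i
        simpa [Equiv.Perm.mul_apply] using hbal2 i
      have hby : ∀ i, IsStrictLinearOrderOn X (bal (Equiv.swap u w i)) := fun i => hbal _
      rw [Phi_congr (hne' := hne) hstep1 (hbal' := hbx)]
      rw [ih (fun j => bal (Equiv.swap u w j)) hby hbx]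
      have hswap := Phi_swapVoters (V := V) X hne bal hbal u w hby
      rw [← hswap]
      apply hanon
      · rw [hdom]; exact hXY
      · rw [hswap, hdom]; exact hXY
  exact key π bal hbal hbal2

set_option maxHeartbeats 1000000 in
theorem margin_Pi0_pos (X : Finset C) (hne : X.Nonempty) (hXY : X ⊆ Y)
    (E : C → C → Prop) (x y : C) (hx : x ∈ X) (hy : y ∈ X) (hxy : x ≠ y)
    (hE : ∀ u v, E u v ↔ (u = x ∧ v = y)) :
    0 < (Pi0 Y X hne hXY E : Profile C V).margin x y := by
  classical
  have hxY : x ∈ Y := hXY hx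
  have hyY : y ∈ Y := hXY hy
  let xs : {c : C // c ∈ Y} := ⟨x, hxY⟩
  let ys : {c : C // c ∈ Y} := ⟨y, hyY⟩
  have hxys : xs ≠ ys := fun h => hxy (congrArg Subtype.val h)
  -- transfer the voter filters to the index level
  have hcard : ∀ u v : C,
      ((Pi0 Y X hne hXY E : Profile C V).voters.filter
        (fun w => (Pi0 Y X hne hXY E : Profile C V).ballot w u v)).card
      = (Finset.univ.filter (fun i : Idx Y => balFor X E i u v)).card := by
    intro u v
    show ((Finset.image (iv Y) Finset.univ).filter
      (fun w => PhiBallot (balFor X E) w u v)).card = _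
    rw [Finset.filter_image, Finset.card_image_of_injective _ iv_inj]
    congr 1
    apply Finset.filter_congr
    intro i _
    rw [PhiBallot_iv]
  -- ballot characterizations
  have caseA : ∀ i : Idx Y, i.1 (kcPos i.2) = xs → i.1 (ksPos i.2) = ys →
      ord (fFor E i) x y := by
    intro i ha hb
    have hnoflip : ¬ E (i.1 (ksPos i.2)).1 (i.1 (kcPos i.2)).1 := by
      rw [ha, hb, hE]
      rintro ⟨h1, h2⟩
      exact hxy h1.symm
    unfold fFor
    rw [if_neg hnoflip]
    refine ⟨hxY, hyY, ?_⟩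
    have h1 : i.1.symm xs = kcPos i.2 := by rw [← ha]; exact Equiv.symm_apply_apply _ _
    have h2 : i.1.symm ys = ksPos i.2 := by rw [← hb]; exact Equiv.symm_apply_apply _ _
    show (i.1.symm xs).1 < (i.1.symm ys).1
    rw [h1, h2]
    show i.2.1 < i.2.1 + 1
    omega
  have caseB : ∀ i : Idx Y, i.1 (kcPos i.2) = ys → i.1 (ksPos i.2) = xs →
      ord (fFor E i) x y := by
    intro i ha hb
    have hflip : E (i.1 (ksPos i.2)).1 (i.1 (kcPos i.2)).1 := by
      rw [ha, hb, hE]; exact ⟨rfl, rfl⟩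
    unfold fFor
    rw [if_pos hflip]
    refine ⟨hxY, hyY, ?_⟩
    have hsx : i.1.symm xs = ksPos i.2 := by rw [← hb]; exact Equiv.symm_apply_apply _ _
    have hsy : i.1.symm ys = kcPos i.2 := by rw [← ha]; exact Equiv.symm_apply_apply _ _
    show ((((Equiv.swap (kcPos i.2) (ksPos i.2)).trans i.1).symm) xs).1
        < ((((Equiv.swap (kcPos i.2) (ksPos i.2)).trans i.1).symm) ys).1
    have e1 : ((Equiv.swap (kcPos i.2) (ksPos i.2)).trans i.1).symm xs
        = Equiv.swap (kcPos i.2) (ksPos i.2) (i.1.symm xs) := by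
      rw [Equiv.symm_trans_apply, Equiv.symm_swap]
    have e2 : ((Equiv.swap (kcPos i.2) (ksPos i.2)).trans i.1).symm ys
        = Equiv.swap (kcPos i.2) (ksPos i.2) (i.1.symm ys) := by
      rw [Equiv.symm_trans_apply, Equiv.symm_swap]
    rw [e1, e2, hsx, hsy, Equiv.swap_apply_right, Equiv.swap_apply_left]
    show i.2.1 < i.2.1 + 1
    omega
  have caseC : ∀ i : Idx Y,
      ¬(i.1 (kcPos i.2) = xs ∧ i.1 (ksPos i.2) = ys) →
      ¬(i.1 (kcPos i.2) = ys ∧ i.1 (ksPos i.2) = xs) →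
      ((ord (fFor E i) x y ↔ ord i.1 x y) ∧ (ord (fFor E i) y x ↔ ord i.1 y x)) := by
    intro i hA hB
    unfold fFor
    split_ifs with hflip
    · constructor
      · apply ord_swapPos
        · rintro ⟨h1, h2⟩
          exact hA ⟨Subtype.ext h1.symm, Subtype.ext h2.symm⟩
        · rintro ⟨h1, h2⟩
          exact hB ⟨Subtype.ext h1.symm, Subtype.ext h2.symm⟩
      · apply ord_swapPos
        · rintro ⟨h1, h2⟩
          exact hB ⟨Subtype.ext h1.symm, Subtype.ext h2.symm⟩
        · rintro ⟨h1, h2⟩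
          exact hA ⟨Subtype.ext h1.symm, Subtype.ext h2.symm⟩
    · exact ⟨Iff.rfl, Iff.rfl⟩
  -- the two sides
  set pos := Finset.univ.filter (fun i : Idx Y => balFor X E i x y) with hposdef
  set neg := Finset.univ.filter (fun i : Idx Y => balFor X E i y x) with hnegdef
  have mempos : ∀ i : Idx Y, i ∈ pos ↔ ord (fFor E i) x y := by
    intro i
    rw [hposdef, Finset.mem_filter]
    constructor
    · rintro ⟨_, h⟩; exact h.1
    · intro h; exact ⟨Finset.mem_univ _, h, hx, hy⟩
  have memneg : ∀ i : Idx Y, i ∈ neg ↔ ord (fFor E i) y x := by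
    intro i
    rw [hnegdef, Finset.mem_filter]
    constructor
    · rintro ⟨_, h⟩; exact h.1
    · intro h; exact ⟨Finset.mem_univ _, h, hy, hx⟩
  -- the pairing map
  let ψ : Idx Y → Idx Y := fun i => (i.1.trans (Equiv.swap xs ys), i.2)
  have ψψ : ∀ i, ψ (ψ i) = i := by
    intro i
    show ((i.1.trans (Equiv.swap xs ys)).trans (Equiv.swap xs ys), i.2) = i
    rw [Equiv.trans_assoc, Equiv.swap_swap, Equiv.trans_refl]
  have hordswap : ∀ (e : Fin Y.card ≃ {c : C // c ∈ Y}),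
      (ord (e.trans (Equiv.swap xs ys)) x y ↔ ord e y x) := by
    intro e
    have key1 : ∀ (hu : x ∈ Y), (e.trans (Equiv.swap xs ys)).symm ⟨x, hu⟩ = e.symm ys := by
      intro hu
      rw [Equiv.symm_trans_apply, Equiv.symm_swap]
      congr 1
      show Equiv.swap xs ys xs = ys
      rw [Equiv.swap_apply_left]
    have key2 : ∀ (hv : y ∈ Y), (e.trans (Equiv.swap xs ys)).symm ⟨y, hv⟩ = e.symm xs := by
      intro hv
      rw [Equiv.symm_trans_apply, Equiv.symm_swap]
      congr 1
      show Equiv.swap xs ys ys = xs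
      rw [Equiv.swap_apply_right]
    constructor
    · rintro ⟨hu, hv, hlt⟩
      refine ⟨hyY, hxY, ?_⟩
      rw [key1 hu, key2 hv] at hlt
      exact hlt
    · rintro ⟨hu, hv, hlt⟩
      refine ⟨hxY, hyY, ?_⟩
      rw [key1 hxY, key2 hyY]
      exact hlt
  have negspec : ∀ i ∈ neg,
      ¬(i.1 (kcPos i.2) = xs ∧ i.1 (ksPos i.2) = ys) ∧
      ¬(i.1 (kcPos i.2) = ys ∧ i.1 (ksPos i.2) = xs) := by
    intro i hi
    have hyx : ord (fFor E i) y x := (memneg i).mp hi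
    constructor
    · rintro ⟨h1, h2⟩; exact ord_asymm (caseA i h1 h2) hyx
    · rintro ⟨h1, h2⟩; exact ord_asymm (caseB i h1 h2) hyx
  have mapPos : ∀ i ∈ neg, ψ i ∈ pos := by
    intro i hi
    obtain ⟨hnA, hnB⟩ := negspec i hi
    have hyx : ord (fFor E i) y x := (memneg i).mp hi
    have hyx' : ord i.1 y x := ((caseC i hnA hnB).2).mp hyx
    have hA' : ¬((ψ i).1 (kcPos (ψ i).2) = xs ∧ (ψ i).1 (ksPos (ψ i).2) = ys) := by
      rintro ⟨h1, h2⟩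
      apply hnB
      constructor
      · have h1'' : Equiv.swap xs ys (i.1 (kcPos i.2)) = xs := h1
        have h1''' := congrArg (Equiv.swap xs ys) h1''
        rw [Equiv.swap_apply_self] at h1'''
        rw [h1''']
        exact Equiv.swap_apply_left xs ys
      · have h2'' : Equiv.swap xs ys (i.1 (ksPos i.2)) = ys := h2
        have h2''' := congrArg (Equiv.swap xs ys) h2''
        rw [Equiv.swap_apply_self] at h2'''
        rw [h2''']
        exact Equiv.swap_apply_right xs ys
    have hB' : ¬((ψ i).1 (kcPos (ψ i).2) = ys ∧ (ψ i).1 (ksPos (ψ i).2) = xs) := by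
      rintro ⟨h1, h2⟩
      apply hnA
      constructor
      · have h1'' : Equiv.swap xs ys (i.1 (kcPos i.2)) = ys := h1
        have h1''' := congrArg (Equiv.swap xs ys) h1''
        rw [Equiv.swap_apply_self] at h1'''
        rw [h1''']
        exact Equiv.swap_apply_right xs ys
      · have h2'' : Equiv.swap xs ys (i.1 (ksPos i.2)) = xs := h2
        have h2''' := congrArg (Equiv.swap xs ys) h2''
        rw [Equiv.swap_apply_self] at h2'''
        rw [h2''']
        exact Equiv.swap_apply_left xs ys
    rw [mempos]
    rw [(caseC (ψ i) hA' hB').1]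
    show ord (i.1.trans (Equiv.swap xs ys)) x y
    rw [hordswap i.1]
    exact hyx'
  -- the extra positive voter
  have hcard2 : 2 ≤ Y.card := by
    have hsub2 : ({x, y} : Finset C) ⊆ Y := by
      intro z hz
      rcases Finset.mem_insert.mp hz with rfl | hz
      · exact hxY
      · rw [Finset.mem_singleton.mp hz]; exact hyY
    calc 2 = ({x, y} : Finset C).card := (Finset.card_pair hxy).symm
      _ ≤ Y.card := Finset.card_le_card hsub2
  let p0 : Fin Y.card := ⟨0, by omega⟩
  let p1 : Fin Y.card := ⟨1, by omega⟩
  let e0 : Fin Y.card ≃ {c : C // c ∈ Y} := (Fintype.equivFinOfCardEq (Fintype.card_coe Y)).symm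
  let e1 := e0.trans (Equiv.swap (e0 p0) ys)
  have he1p0 : e1 p0 = ys := by
    show Equiv.swap (e0 p0) ys (e0 p0) = ys
    rw [Equiv.swap_apply_left]
  let e2 := e1.trans (Equiv.swap (e1 p1) xs)
  have he2p1 : e2 p1 = xs := by
    show Equiv.swap (e1 p1) xs (e1 p1) = xs
    rw [Equiv.swap_apply_left]
  have he2p0 : e2 p0 = ys := by
    show Equiv.swap (e1 p1) xs (e1 p0) = ys
    rw [he1p0]
    rw [Equiv.swap_apply_of_ne_of_ne]
    · intro h
      have hp : p0 = p1 := e1.injective (he1p0.trans h)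
      have : (0 : ℕ) = 1 := congrArg Fin.val hp
      omega
    · exact fun h => hxys h.symm
  let k0 : Fin (Y.card - 1) := ⟨0, by omega⟩
  let w : Idx Y := (e2, k0)
  have hwkc : w.1 (kcPos w.2) = ys := by
    show e2 (kcPos k0) = ys
    have : kcPos k0 = p0 := rfl
    rw [this, he2p0]
  have hwks : w.1 (ksPos w.2) = xs := by
    show e2 (ksPos k0) = xs
    have : ksPos k0 = p1 := rfl
    rw [this, he2p1]
  have hwpos : w ∈ pos := (mempos w).mpr (caseB w hwkc hwks)
  have havoid : ∀ i ∈ neg, ψ i ≠ w := by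
    intro i hi hcontra
    have hiw : i = ψ w := by rw [← hcontra, ψψ]
    have hposw : ord (fFor E (ψ w)) x y := by
      apply caseA (ψ w)
      · show Equiv.swap xs ys (w.1 (kcPos w.2)) = xs
        rw [hwkc, Equiv.swap_apply_right]
      · show Equiv.swap xs ys (w.1 (ksPos w.2)) = ys
        rw [hwks, Equiv.swap_apply_left]
    rw [hiw] at hi
    exact ord_asymm hposw ((memneg _).mp hi)
  have hinj : Set.InjOn ψ neg := by
    intro i _ j _ h
    rw [← ψψ i, h, ψψ]
  have hmaps : ∀ i ∈ neg, ψ i ∈ pos.erase w := by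
    intro i hi
    exact Finset.mem_erase.mpr ⟨havoid i hi, mapPos i hi⟩
  have hle : neg.card ≤ (pos.erase w).card := Finset.card_le_card_of_injOn ψ hmaps hinj
  have herase : (pos.erase w).card = pos.card - 1 := Finset.card_erase_of_mem hwpos
  have hone : 1 ≤ pos.card := Finset.card_pos.mpr ⟨w, hwpos⟩
  have hlt : neg.card < pos.card := by omega
  show 0 < (Pi0 Y X hne hXY E : Profile C V).margin x y
  unfold Profile.margin
  rw [hcard x y, hcard y x, ← hposdef, ← hnegdef]
  omega

theorem mem_Y_swap {a b : C} (ha : a ∈ Y) (hb : b ∈ Y) (u : C) :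
    Equiv.swap a b u ∈ Y ↔ u ∈ Y := by
  rcases eq_or_ne u a with rfl | hua
  · rw [Equiv.swap_apply_left]
    exact ⟨fun _ => ha, fun _ => hb⟩
  · rcases eq_or_ne u b with rfl | hub
    · rw [Equiv.swap_apply_right]
      exact ⟨fun _ => hb, fun _ => ha⟩
    · rw [Equiv.swap_apply_of_ne_of_ne hua hub]

theorem swap_subtype {a b : C} (ha : a ∈ Y) (hb : b ∈ Y) (u : C) (hu : u ∈ Y)
    (hu' : Equiv.swap a b u ∈ Y) :
    Equiv.swap (⟨a, ha⟩ : {c : C // c ∈ Y}) ⟨b, hb⟩ ⟨u, hu⟩ = ⟨Equiv.swap a b u, hu'⟩ := by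
  rcases eq_or_ne u a with rfl | hua
  · have h1 : (⟨u, hu⟩ : {c : C // c ∈ Y}) = ⟨u, ha⟩ := rfl
    rw [h1, Equiv.swap_apply_left]
    exact Subtype.ext (Equiv.swap_apply_left u b).symm
  · rcases eq_or_ne u b with rfl | hub
    · have h1 : (⟨u, hu⟩ : {c : C // c ∈ Y}) = ⟨u, hb⟩ := rfl
      rw [h1, Equiv.swap_apply_right]
      exact Subtype.ext (Equiv.swap_apply_right a u).symm
    · rw [Equiv.swap_apply_of_ne_of_ne (fun h => hua (congrArg Subtype.val h))
        (fun h => hub (congrArg Subtype.val h))]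
      exact Subtype.ext (Equiv.swap_apply_of_ne_of_ne hua hub).symm

theorem swapRel_restrictRel (a b : C) (X : Finset C) (r : C → C → Prop) :
    swapRel a b (restrictRel X r)
      = restrictRel (X.image (Equiv.swap a b)) (swapRel a b r) := by
  funext u v
  apply propext
  have hmem : ∀ w : C, w ∈ X.image (Equiv.swap a b) ↔ Equiv.swap a b w ∈ X := by
    intro w
    constructor
    · intro hw
      rcases Finset.mem_image.mp hw with ⟨z, hz, rfl⟩
      rwa [Equiv.swap_apply_self]
    · intro hw
      exact Finset.mem_image.mpr ⟨_, hw, Equiv.swap_apply_self a b w⟩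
  constructor
  · rintro ⟨hr, hu, hv⟩
    exact ⟨hr, (hmem u).mpr hu, (hmem v).mpr hv⟩
  · rintro ⟨hr, hu, hv⟩
    exact ⟨hr, (hmem u).mp hu, (hmem v).mp hv⟩

theorem swapRel_ord {a b : C} (ha : a ∈ Y) (hb : b ∈ Y) (f : Fin Y.card ≃ {c : C // c ∈ Y}) :
    swapRel a b (ord f)
      = ord (f.trans (Equiv.swap (⟨a, ha⟩ : {c : C // c ∈ Y}) ⟨b, hb⟩)) := by
  funext u v
  apply propext
  have hsymm : ∀ (w : C) (hw : w ∈ Y),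
      (f.trans (Equiv.swap (⟨a, ha⟩ : {c : C // c ∈ Y}) ⟨b, hb⟩)).symm ⟨w, hw⟩
        = f.symm (Equiv.swap (⟨a, ha⟩ : {c : C // c ∈ Y}) ⟨b, hb⟩ ⟨w, hw⟩) := by
    intro w hw
    rw [Equiv.symm_trans_apply, Equiv.symm_swap]
  constructor
  · rintro ⟨hu, hv, hlt⟩
    -- hu : Equiv.swap a b u ∈ Y
    have huY : u ∈ Y := (mem_Y_swap ha hb u).mp hu
    have hvY : v ∈ Y := (mem_Y_swap ha hb v).mp hv
    refine ⟨huY, hvY, ?_⟩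
    rw [hsymm u huY, hsymm v hvY, swap_subtype ha hb u huY hu, swap_subtype ha hb v hvY hv]
    exact hlt
  · rintro ⟨hu, hv, hlt⟩
    have huY : Equiv.swap a b u ∈ Y := (mem_Y_swap ha hb u).mpr hu
    have hvY : Equiv.swap a b v ∈ Y := (mem_Y_swap ha hb v).mpr hv
    refine ⟨huY, hvY, ?_⟩
    rw [hsymm u hu, hsymm v hv, swap_subtype ha hb u hu huY, swap_subtype ha hb v hv hvY] at hlt
    exact hlt

/-- The permutation of voter indices induced by a transposition of candidates. -/
def permIdx {a b : C} (ha : a ∈ Y) (hb : b ∈ Y) : Equiv.Perm (Idx Y) where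
  toFun := fun i => (i.1.trans (Equiv.swap (⟨a, ha⟩ : {c : C // c ∈ Y}) ⟨b, hb⟩), i.2)
  invFun := fun i => (i.1.trans (Equiv.swap (⟨a, ha⟩ : {c : C // c ∈ Y}) ⟨b, hb⟩), i.2)
  left_inv := by
    intro i
    show ((i.1.trans _).trans _, i.2) = i
    rw [Equiv.trans_assoc, Equiv.swap_swap, Equiv.trans_refl]
  right_inv := by
    intro i
    show ((i.1.trans _).trans _, i.2) = i
    rw [Equiv.trans_assoc, Equiv.swap_swap, Equiv.trans_refl]

theorem fFor_permIdx {a b : C} (ha : a ∈ Y) (hb : b ∈ Y) (E : C → C → Prop) (i : Idx Y) :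
    fFor (fun u v => E (Equiv.swap a b u) (Equiv.swap a b v)) (permIdx ha hb i)
      = (fFor E i).trans (Equiv.swap (⟨a, ha⟩ : {c : C // c ∈ Y}) ⟨b, hb⟩) := by
  have hval : ∀ p : Fin Y.card, (((permIdx ha hb i).1) p).1
      = Equiv.swap a b ((i.1 p).1) := by
    intro p
    show ((Equiv.swap (⟨a, ha⟩ : {c : C // c ∈ Y}) ⟨b, hb⟩) (i.1 p)).1 = _
    have hmem : Equiv.swap a b ((i.1 p).1) ∈ Y := (mem_Y_swap ha hb _).mpr (i.1 p).2
    rw [show (i.1 p) = (⟨(i.1 p).1, (i.1 p).2⟩ : {c : C // c ∈ Y}) from rfl]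
    rw [swap_subtype ha hb ((i.1 p).1) ((i.1 p).2) hmem]
  have hk : (permIdx ha hb i).2 = i.2 := rfl
  unfold fFor
  rw [hk, hval (ksPos i.2), hval (kcPos i.2)]
  simp only [Equiv.swap_apply_self]
  split_ifs with hcond
  · show (Equiv.swap (kcPos i.2) (ksPos i.2)).trans (i.1.trans _) = _
    rw [Equiv.trans_assoc]
  · rfl

set_option maxHeartbeats 1000000 in
/-- Swapping two candidates of `Y` in the canonical profile amounts to permuting
its ballots. -/
theorem Pi0_swapCands (X : Finset C) (hne : X.Nonempty) (hXY : X ⊆ Y) (E : C → C → Prop)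
    {a b : C} (ha : a ∈ Y) (hb : b ∈ Y)
    (hne' : (X.image (Equiv.swap a b)).Nonempty) (hXY' : X.image (Equiv.swap a b) ⊆ Y)
    (hbal : ∀ i, IsStrictLinearOrderOn (X.image (Equiv.swap a b))
      (balFor (X.image (Equiv.swap a b))
        (fun u v => E (Equiv.swap a b u) (Equiv.swap a b v)) (permIdx ha hb i))) :
    (Pi0 Y X hne hXY E : Profile C V).swapCands a b
      = Phi Y (X.image (Equiv.swap a b)) hne'
          (fun i => balFor (X.image (Equiv.swap a b))
            (fun u v => E (Equiv.swap a b u) (Equiv.swap a b v)) (permIdx ha hb i)) hbal := by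
  refine Profile.ext' rfl rfl ?_
  funext v
  show swapRel a b (PhiBallot (V := V) (balFor X E) v)
      = PhiBallot (V := V) (fun i => balFor (X.image (Equiv.swap a b))
          (fun u v => E (Equiv.swap a b u) (Equiv.swap a b v)) (permIdx ha hb i)) v
  by_cases h : ∃ i : Idx Y, iv (V := V) Y i = v
  · rcases h with ⟨i, rfl⟩
    rw [PhiBallot_iv, PhiBallot_iv]
    show swapRel a b (restrictRel X (ord (fFor E i))) = _
    rw [swapRel_restrictRel, swapRel_ord ha hb]
    unfold balFor
    rw [fFor_permIdx ha hb E i]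
  · rw [PhiBallot_off h, PhiBallot_off h, swapRel_bot]

/-- Compatibility of the canonical profile with deleting a candidate. -/
theorem key_minus (P : Profile C V) (hP : P.cands ⊆ Y) (y : C)
    (h : (P.cands.erase y).Nonempty) (hsub : (P.minus y h).cands ⊆ Y) :
    (Pi0 Y (P.minus y h).cands (P.minus y h).cands_nonempty hsub
        (Epred (P.minus y h)) : Profile C V)
      = (Pi0 Y P.cands P.cands_nonempty hP (Epred P)).minus y h := by
  have e1 : Epred (P.minus y h)
      = fun u v => u ∈ P.cands.erase y ∧ v ∈ P.cands.erase y ∧ Epred P u v :=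
    Epred_restrict P (P.cands.erase y) h (P.cands.erase_subset y)
  refine (Pi0_congr (hne' := h) (hXY' := hsub) rfl e1).trans ?_
  exact Pi0_restrict P.cands (P.cands.erase y) h P.cands_nonempty hP
    (P.cands.erase_subset y) (Epred P) (P.cands.erase_subset y)

/-- Compatibility of the canonical profile with restricting to a pair. -/
theorem key_pair (P : Profile C V) (hP : P.cands ⊆ Y) (x y : C)
    (hx : x ∈ P.cands) (hy : y ∈ P.cands) (hsub : (P.pair x y hx hy).cands ⊆ Y) :
    (Pi0 Y (P.pair x y hx hy).cands (P.pair x y hx hy).cands_nonempty hsub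
        (Epred (P.pair x y hx hy)) : Profile C V)
      = (Pi0 Y P.cands P.cands_nonempty hP (Epred P)).pair x y hx hy := by
  have e1 : Epred (P.pair x y hx hy)
      = fun u v => u ∈ ({x, y} : Finset C) ∧ v ∈ ({x, y} : Finset C) ∧ Epred P u v :=
    Epred_restrict P {x, y} _ _
  refine (Pi0_congr (hne' := ⟨x, Finset.mem_insert_self x {y}⟩) (hXY' := hsub) rfl e1).trans ?_
  have hpairsub : ({x, y} : Finset C) ⊆ P.cands := by
    intro z hz
    rcases Finset.mem_insert.mp hz with rfl | hz
    · exact hx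
    · rw [Finset.mem_singleton.mp hz]; exact hy
  exact Pi0_restrict P.cands {x, y} ⟨x, Finset.mem_insert_self x {y}⟩ P.cands_nonempty hP
    hpairsub (Epred P) hpairsub

/-- Characterization of `Epred` for two-candidate profiles. -/
theorem Epred_char (P : Profile C V) (x y : C) (hXeq : P.cands = {x, y})
    (hxy : x ≠ y) (hpos : 0 < P.margin x y) :
    ∀ u v, Epred P u v ↔ (u = x ∧ v = y) := by
  intro u v
  constructor
  · rintro ⟨hu, hv, hm'⟩
    rw [hXeq] at hu hv
    have hyx' : P.margin y x < 0 := by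
      have := margin_antisymm P x y; omega
    rcases Finset.mem_insert.mp hu with rfl | hu2
    · rcases Finset.mem_insert.mp hv with rfl | hv2
      · exfalso; rw [margin_self] at hm'; omega
      · rw [Finset.mem_singleton.mp hv2]; exact ⟨rfl, rfl⟩
    · rw [Finset.mem_singleton.mp hu2] at hm' ⊢
      rcases Finset.mem_insert.mp hv with rfl | hv2
      · exfalso; omega
      · rw [Finset.mem_singleton.mp hv2] at hm' ⊢
        exfalso; rw [margin_self] at hm'; omega
  · rintro ⟨rfl, rfl⟩
    refine ⟨?_, ?_, hpos⟩
    · rw [hXeq]; exact Finset.mem_insert_self _ _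
    · rw [hXeq]; exact Finset.mem_insert.mpr (Or.inr (Finset.mem_singleton_self _))

end Main


end MajTransfer

open MajTransfer
/-- For any finite set `Y` of candidates: if there is a voting method
with domain `{P : X(P) ⊆ Y}` satisfying anonymity, neutrality, binary
quasi-resoluteness, binary γ, and α-resoluteness, then there is a majoritarian such
voting method with the same domain satisfying the same axioms. -/
theorem majoritarian_transfer (C V : Type) [Infinite C] [Infinite V] (Y : Finset C) :
    (∃ F : VotingMethod C V,
      F.dom = {P : Profile C V | P.cands ⊆ Y} ∧
      F.Anonymous ∧ F.Neutral ∧ F.BinaryQuasiResolute ∧ F.BinaryGamma ∧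
      F.AlphaResolute) →
    ∃ F : VotingMethod C V,
      F.dom = {P : Profile C V | P.cands ⊆ Y} ∧
      F.Majoritarian ∧ F.Anonymous ∧ F.Neutral ∧ F.BinaryQuasiResolute ∧
      F.BinaryGamma ∧ F.AlphaResolute := by
  rintro ⟨F, hdom, hanon, hneu, hbqr, hbg, har⟩
  classical
  have hmem : ∀ (X : Finset C) (hne : X.Nonempty) (hXY : X ⊆ Y) (E : C → C → Prop),
      (Pi0 Y X hne hXY E : Profile C V) ∈ F.dom := by
    intro X hne hXY E
    rw [hdom]
    exact hXY
  let W : Profile C V → Finset C := fun P =>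
    if h : P.cands ⊆ Y then
      F.winners (Pi0 Y P.cands P.cands_nonempty h (Epred P))
    else P.cands
  have hWeq : ∀ (P : Profile C V) (h : P.cands ⊆ Y),
      W P = F.winners (Pi0 Y P.cands P.cands_nonempty h (Epred P)) :=
    fun P h => dif_pos h
  -- Majoritarianism
  have hMaj : ∀ (P : Profile C V), P.cands ⊆ Y → ∀ (P' : Profile C V), P'.cands ⊆ Y →
      P.cands = P'.cands →
      (∀ x ∈ P.cands, ∀ y ∈ P.cands, (0 < P.margin x y ↔ 0 < P'.margin x y)) →
      W P = W P' := by
    intro P hP P' hP' hc hiff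
    rw [hWeq P hP, hWeq P' hP']
    apply congrArg
    apply Pi0_congr hc
    funext u v
    apply propext
    constructor
    · rintro ⟨hu, hv, hm⟩
      exact ⟨hc ▸ hu, hc ▸ hv, (hiff u hu v hv).mp hm⟩
    · rintro ⟨hu, hv, hm⟩
      have hu' : u ∈ P.cands := hc ▸ hu
      have hv' : v ∈ P.cands := hc ▸ hv
      exact ⟨hu', hv', (hiff u hu' v hv').mpr hm⟩
  -- Anonymity
  have hAnon : ∀ (P : Profile C V), P.cands ⊆ Y → ∀ i j : V,
      (P.swapVoters i j).cands ⊆ Y → W (P.swapVoters i j) = W P := by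
    intro P hP i j hP'
    rw [hWeq _ hP', hWeq P hP]
    apply congrArg
    exact Pi0_congr rfl (Epred_swapVoters P i j)
  -- Neutrality
  have hNeut : ∀ (P : Profile C V), P.cands ⊆ Y → ∀ a b : C,
      (P.swapCands a b).cands ⊆ Y →
      W (P.swapCands a b) = (W P).image (Equiv.swap a b) := by
    intro P hP a b hP'
    rw [hWeq _ hP', hWeq P hP]
    by_cases hab : a ∈ Y ∧ b ∈ Y
    · obtain ⟨ha, hb⟩ := hab
      have e0 : (Pi0 Y (P.swapCands a b).cands (P.swapCands a b).cands_nonempty hP'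
            (Epred (P.swapCands a b)) : Profile C V)
          = Pi0 Y (P.cands.image (Equiv.swap a b)) (P.swapCands a b).cands_nonempty hP'
              (fun u v => Epred P (Equiv.swap a b u) (Equiv.swap a b v)) :=
        Pi0_congr rfl (Epred_swapCands P a b)
      have hbal2 : ∀ i, IsStrictLinearOrderOn (P.cands.image (Equiv.swap a b))
          (balFor (P.cands.image (Equiv.swap a b))
            (fun u v => Epred P (Equiv.swap a b u) (Equiv.swap a b v)) (permIdx ha hb i)) :=
        fun i => (ord_lin _).restrict hP'
      have hperm := winners_Phi_perm F hdom hanon (P.cands.image (Equiv.swap a b))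
        (P.swapCands a b).cands_nonempty hP' (permIdx ha hb)
        (balFor (P.cands.image (Equiv.swap a b))
          (fun u v => Epred P (Equiv.swap a b u) (Equiv.swap a b v)))
        (fun i => (ord_lin _).restrict hP') hbal2
      have e1 := Pi0_swapCands (V := V) P.cands P.cands_nonempty hP (Epred P) ha hb
        (P.swapCands a b).cands_nonempty hP' hbal2
      have chain : F.winners (Pi0 Y (P.swapCands a b).cands
            (P.swapCands a b).cands_nonempty hP' (Epred (P.swapCands a b)))
          = F.winners ((Pi0 Y P.cands P.cands_nonempty hP (Epred P)).swapCands a b) :=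
        (congrArg F.winners e0).trans (hperm.symm.trans (congrArg F.winners e1.symm))
      refine chain.trans ?_
      apply hneu _ (hmem _ _ _ _) a b
      rw [hdom]
      exact hP'
    · have hax : a ∉ P.cands ∧ b ∉ P.cands := by
        by_contra hcon
        push_neg at hcon
        rcases Classical.em (a ∈ P.cands) with haX | haX
        · apply hab
          refine ⟨hP haX, ?_⟩
          apply hP'
          show b ∈ P.cands.image (Equiv.swap a b)
          exact Finset.mem_image.mpr ⟨a, haX, Equiv.swap_apply_left a b⟩
        · apply hab
          have hbX := hcon haX
          refine ⟨?_, hP hbX⟩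
          apply hP'
          show a ∈ P.cands.image (Equiv.swap a b)
          exact Finset.mem_image.mpr ⟨b, hbX, Equiv.swap_apply_right a b⟩
      obtain ⟨haX, hbX⟩ := hax
      have hfix : ∀ z ∈ P.cands, Equiv.swap a b z = z := by
        intro z hz
        exact Equiv.swap_apply_of_ne_of_ne (fun hc => haX (hc ▸ hz)) (fun hc => hbX (hc ▸ hz))
      have hXim : (P.swapCands a b).cands = P.cands := by
        show P.cands.image (Equiv.swap a b) = P.cands
        rw [Finset.image_congr (g := id) (fun z hz => hfix z hz), Finset.image_id]
      have hEeq : Epred (P.swapCands a b) = Epred P := by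
        rw [Epred_swapCands]
        funext u v
        apply propext
        constructor
        · rintro ⟨hu, hv, hm⟩
          have hu' := hfix _ hu
          rw [Equiv.swap_apply_self] at hu'
          have hv' := hfix _ hv
          rw [Equiv.swap_apply_self] at hv'
          rw [hu', hv']
          exact ⟨hu, hv, hm⟩
        · rintro ⟨hu, hv, hm⟩
          rw [hfix u hu, hfix v hv]
          exact ⟨hu, hv, hm⟩
      have e0 : (Pi0 Y (P.swapCands a b).cands (P.swapCands a b).cands_nonempty hP'
            (Epred (P.swapCands a b)) : Profile C V)
          = Pi0 Y P.cands P.cands_nonempty hP (Epred P) := Pi0_congr hXim hEeq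
      rw [e0]
      have hw := F.winners_sub _ (hmem P.cands P.cands_nonempty hP (Epred P))
      have himg : (F.winners (Pi0 Y P.cands P.cands_nonempty hP (Epred P))).image
            (Equiv.swap a b)
          = (F.winners (Pi0 Y P.cands P.cands_nonempty hP (Epred P))).image id :=
        Finset.image_congr (fun z hz => hfix z (hw hz))
      rw [himg, Finset.image_id]
  -- Binary quasi-resoluteness
  have hBQR : ∀ (P : Profile C V), P.cands ⊆ Y → P.cands.card = 2 →
      (∀ x ∈ P.cands, ∀ y ∈ P.cands, x ≠ y → P.margin x y ≠ 0) →
      (W P).card = 1 := by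
    intro P hP hcard hmarg
    rw [hWeq P hP]
    apply hbqr _ (hmem _ _ _ _) hcard
    obtain ⟨x, y, hxy, hXeq⟩ := Finset.card_eq_two.mp hcard
    have hx : x ∈ P.cands := by rw [hXeq]; exact Finset.mem_insert_self _ _
    have hy : y ∈ P.cands := by
      rw [hXeq]; exact Finset.mem_insert.mpr (Or.inr (Finset.mem_singleton_self _))
    have hm := hmarg x hx y hy hxy
    have key : (Pi0 Y P.cands P.cands_nonempty hP (Epred P) : Profile C V).margin x y ≠ 0 := by
      rcases lt_or_gt_of_ne hm with hneg | hpos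
      · have hyx : 0 < P.margin y x := by
          have := margin_antisymm P x y; omega
        have h2 := margin_Pi0_pos (V := V) P.cands P.cands_nonempty hP (Epred P) y x hy hx
          (fun hh => hxy hh.symm)
          (Epred_char P y x (by rw [hXeq, Finset.pair_comm]) (fun hh => hxy hh.symm) hyx)
        have h3 := margin_antisymm
          (Pi0 Y P.cands P.cands_nonempty hP (Epred P) : Profile C V) x y
        omega
      · exact ne_of_gt (margin_Pi0_pos (V := V) P.cands P.cands_nonempty hP (Epred P) x y hx hy
          hxy (Epred_char P x y hXeq hxy hpos))
    intro u hu v hv huv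
    have hu' : u ∈ P.cands := hu
    have hv' : v ∈ P.cands := hv
    rw [hXeq] at hu' hv'
    rcases Finset.mem_insert.mp hu' with rfl | hu2
    · rcases Finset.mem_insert.mp hv' with rfl | hv2
      · exact absurd rfl huv
      · rw [Finset.mem_singleton.mp hv2]
        exact key
    · rw [Finset.mem_singleton.mp hu2]
      rcases Finset.mem_insert.mp hv' with rfl | hv2
      · rw [margin_antisymm]
        exact neg_ne_zero.mpr key
      · exfalso
        apply huv
        rw [Finset.mem_singleton.mp hu2, Finset.mem_singleton.mp hv2]
  -- Binary gamma
  have hBG : ∀ (P : Profile C V), P.cands ⊆ Y → ∀ x, ∀ hx : x ∈ P.cands, ∀ y,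
      ∀ hy : y ∈ P.cands, x ≠ y → ∀ h : (P.cands.erase y).Nonempty,
      (P.minus y h).cands ⊆ Y → (P.pair x y hx hy).cands ⊆ Y →
      x ∈ W (P.minus y h) → W (P.pair x y hx hy) = {x} → x ∈ W P := by
    intro P hP x hx y hy hxy h hd1 hd2 hwin hpair
    rw [hWeq P hP]
    rw [hWeq _ hd1] at hwin
    rw [hWeq _ hd2] at hpair
    rw [key_minus P hP y h hd1] at hwin
    rw [key_pair P hP x y hx hy hd2] at hpair
    refine hbg _ (hmem _ _ _ _) x hx y hy hxy h ?_ ?_ hwin hpair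
    · rw [hdom]; exact hd1
    · rw [hdom]; exact hd2
  -- Alpha resoluteness
  have hAR : ∀ (P : Profile C V), P.cands ⊆ Y → ∀ x, ∀ hx : x ∈ P.cands, ∀ y,
      ∀ hy : y ∈ P.cands, x ≠ y → ∀ h : (P.cands.erase y).Nonempty,
      (P.minus y h).cands ⊆ Y → (P.pair x y hx hy).cands ⊆ Y →
      x ∈ W (P.minus y h) → W (P.pair x y hx hy) = {x} →
      (W P).card ≤ (W (P.minus y h)).card := by
    intro P hP x hx y hy hxy h hd1 hd2 hwin hpair
    rw [hWeq P hP]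
    rw [hWeq _ hd1] at hwin ⊢
    rw [hWeq _ hd2] at hpair
    rw [key_minus P hP y h hd1] at hwin ⊢
    rw [key_pair P hP x y hx hy hd2] at hpair
    refine har _ (hmem _ _ _ _) x hx y hy hxy h ?_ ?_ hwin hpair
    · rw [hdom]; exact hd1
    · rw [hdom]; exact hd2
  refine ⟨⟨{P : Profile C V | P.cands ⊆ Y}, hdom ▸ F.dom_nonempty, W, ?_, ?_⟩,
    rfl, ?_, ?_, ?_, ?_, ?_, ?_⟩
  · intro P hP
    rw [hWeq P hP]
    exact F.winners_nonempty _ (hmem _ _ _ _)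
  · intro P hP
    rw [hWeq P hP]
    exact F.winners_sub _ (hmem _ _ _ _)
  · exact fun P hP P' hP' => hMaj P hP P' hP'
  · exact fun P hP i j hP' => hAnon P hP i j hP'
  · exact fun P hP a b hP' => hNeut P hP a b hP'
  · exact fun P hP h2 hm => hBQR P hP h2 hm
  · exact fun P hP x hx y hy hxy h hd1 hd2 => hBG P hP x hx y hy hxy h hd1 hd2
  · exact fun P hP x hx y hy hxy h hd1 hd2 => hAR P hP x hx y hy hxy h hd1 hd2
end
end

section
/- (McGarvey) Every weak tournament is the majority graph of a profile: for every weak tournament T with vertex set a finite nonempty X(T) ⊆ 𝒳, there exists a profile P with X(P) = X(T) such that M(P) = T. -/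
/- Formalization of voting-theoretic notions from Holliday, Norman, Pacuit, Zahedian,
"Impossibility theorems involving weakenings of expansion consistency and resoluteness
in voting". Candidates form an infinite type `C` and voters an infinite type `V`. -/

open Classical

noncomputable section

/-- A weak tournament: an asymmetric directed graph on a finite nonempty set of
vertices. -/
structure WeakTournament (C : Type) where
  verts : Finset C
  verts_nonempty : verts.Nonempty
  edge : C → C → Prop
  edge_asymm : ∀ x y, edge x y → ¬ edge y x
  edge_dom : ∀ x y, edge x y → x ∈ verts ∧ y ∈ verts


section McGarveyAux

variable {C : Type} [LinearOrder C]

def mcgB (s : Finset C) (a b : C) (v : Bool) : C → C → Prop :=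
  fun x y => x ∈ s ∧ y ∈ s ∧ x ≠ y ∧
    (if v then x = a ∨ (x = b ∧ y ≠ a) ∨ (x ≠ a ∧ x ≠ b ∧ y ≠ a ∧ y ≠ b ∧ x < y)
     else y = b ∨ (y = a ∧ x ≠ b) ∨ (x ≠ a ∧ x ≠ b ∧ y ≠ a ∧ y ≠ b ∧ y < x))

lemma mcgB_lin {s : Finset C} {a b : C}
    (ha : a ∈ s) (hb : b ∈ s) (hab : a ≠ b) (v : Bool) :
    IsStrictLinearOrderOn s (mcgB s a b v) := by
  refine ⟨fun x h => h.2.2.1 rfl, ?_, ?_, fun x y h => ⟨h.1, h.2.1⟩⟩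
  · rintro x y z ⟨hx, hy, hxy, h1⟩ ⟨_, hz, hyz, h2⟩
    refine ⟨hx, hz, ?_, ?_⟩ <;> cases v <;>
      simp only [if_true, if_false, Bool.false_eq_true] at h1 h2 ⊢ <;>
      rcases h1 with h1 | ⟨h1, h1'⟩ | ⟨ha1, hb1, ha2, hb2, hlt⟩ <;>
      rcases h2 with h2 | ⟨h2, h2'⟩ | ⟨ha3, hb3, ha4, hb4, hlt'⟩ <;>
      first
        | (rintro rfl; exact absurd hlt' (lt_asymm hlt))
        | (rintro rfl; exact absurd hlt (lt_asymm hlt'))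
        | (rintro rfl; simp_all; done)
        | (simp_all; done)
        | tauto
        | exact Or.inr (Or.inr ⟨ha1, hb1, ha4, hb4, lt_trans hlt hlt'⟩)
        | exact Or.inr (Or.inr ⟨ha1, hb1, ha4, hb4, lt_trans hlt' hlt⟩)
        | exact absurd hlt' (lt_asymm hlt)
        | exact absurd hlt (lt_asymm hlt')
  · intro x hx y hy hxy
    rcases lt_trichotomy x y with h | h | h <;>
      by_cases hxa : x = a <;> by_cases hya : y = a <;>
      by_cases hxb : x = b <;> by_cases hyb : y = b <;>
      cases v <;> simp_all [mcgB] <;> tauto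

lemma mcgB_swap {s : Finset C} {a b x y : C}
    (hab : a ≠ b) (hxy : x ≠ y) (h1 : ¬(x = a ∧ y = b)) (h2 : ¬(y = a ∧ x = b)) :
    mcgB s a b true x y ↔ mcgB s a b false y x := by
  simp only [mcgB, Bool.false_eq_true, if_true, if_false]
  constructor
  · rintro ⟨hx, hy, -, h⟩
    refine ⟨hy, hx, Ne.symm hxy, ?_⟩
    tauto
  · rintro ⟨hy, hx, -, h⟩
    refine ⟨hx, hy, hxy, ?_⟩
    tauto

lemma mcgB_ab {s : Finset C} {a b : C}
    (ha : a ∈ s) (hb : b ∈ s) (hab : a ≠ b) (v : Bool) :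
    mcgB s a b v a b ∧ ¬ mcgB s a b v b a := by
  cases v <;> simp [mcgB, hab, Ne.symm hab, ha, hb]

lemma mcgB_contrib {s : Finset C} {a b x y : C}
    (ha : a ∈ s) (hb : b ∈ s) (hab : a ≠ b) (hxy : x ≠ y) :
    (∑ v : Bool, ((if mcgB s a b v x y then (1 : ℤ) else 0) -
        (if mcgB s a b v y x then 1 else 0))) =
      if (a, b) = (x, y) then 2 else if (a, b) = (y, x) then -2 else 0 := by
  by_cases hc1 : (a, b) = (x, y)
  · obtain ⟨rfl, rfl⟩ := Prod.ext_iff.mp hc1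
    rw [if_pos rfl, Fintype.sum_bool,
      if_pos (mcgB_ab ha hb hab true).1, if_pos (mcgB_ab ha hb hab false).1,
      if_neg (mcgB_ab ha hb hab true).2, if_neg (mcgB_ab ha hb hab false).2]
    norm_num
  · rw [if_neg hc1]
    by_cases hc2 : (a, b) = (y, x)
    · obtain ⟨rfl, rfl⟩ := Prod.ext_iff.mp hc2
      rw [if_pos rfl, Fintype.sum_bool,
        if_pos (mcgB_ab ha hb hab true).1, if_pos (mcgB_ab ha hb hab false).1,
        if_neg (mcgB_ab ha hb hab true).2, if_neg (mcgB_ab ha hb hab false).2]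
      norm_num
    · rw [if_neg hc2]
      have e1 : mcgB s a b true x y ↔ mcgB s a b false y x :=
        mcgB_swap hab hxy (fun h => hc1 (by simp [h.1, h.2]))
          (fun h => hc2 (by simp [h.1, h.2]))
      have e2 : mcgB s a b true y x ↔ mcgB s a b false x y :=
        mcgB_swap hab hxy.symm (fun h => hc2 (by simp [h.1, h.2]))
          (fun h => hc1 (by simp [h.1, h.2]))
      rw [Fintype.sum_bool]
      simp only [e1, e2]
      ring

end McGarveyAux

/-- **McGarvey.** Every weak tournament is the majority graph of a
profile: there is a profile with the same candidates whose majority graph (positive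
margin relation) coincides with the edge relation of the tournament. -/
theorem mcgarvey (C V : Type) [Infinite C] [Infinite V] (T : WeakTournament C) :
    ∃ P : Profile C V, P.cands = T.verts ∧
      ∀ x ∈ T.verts, ∀ y ∈ T.verts, (0 < P.margin x y ↔ T.edge x y) := by
  letI : LinearOrder C := linearOrderOfSTO WellOrderingRel
  have edge_ne : ∀ {a b : C}, T.edge a b → a ≠ b := by
    rintro a b h rfl; exact T.edge_asymm _ _ h h
  set E : Finset (C × C) := (T.verts ×ˢ T.verts).filter (fun p => T.edge p.1 p.2) with hE
  set S : Finset ((C × C) × Bool) := E ×ˢ (Finset.univ : Finset Bool) with hS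
  have memE : ∀ u w : C, (u, w) ∈ E ↔ (u ∈ T.verts ∧ w ∈ T.verts ∧ T.edge u w) := by
    intro u w
    simp [hE, Finset.mem_filter, Finset.mem_product, and_assoc]
  set f : ((C × C) × Bool) → V := fun p =>
    if h : p ∈ S then Infinite.natEmbedding V ((S.equivFin ⟨p, h⟩ : Fin S.card) : ℕ)
    else Infinite.natEmbedding V 0 with hf
  have hfinj : ∀ p ∈ S, ∀ q ∈ S, f p = f q → p = q := by
    intro p hp q hq h
    simp only [hf, dif_pos hp, dif_pos hq] at h
    have h2 := (Infinite.natEmbedding V).injective h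
    have h3 : S.equivFin ⟨p, hp⟩ = S.equivFin ⟨q, hq⟩ := Fin.ext h2
    exact Subtype.ext_iff.mp (S.equivFin.injective h3)
  set Bl : ((C × C) × Bool) → C → C → Prop :=
    fun p => mcgB T.verts p.1.1 p.1.2 p.2 with hBl
  set bal : V → C → C → Prop := fun v =>
    if h : ∃ p, p ∈ S ∧ f p = v then Bl h.choose else fun _ _ => False with hbal
  have bal_eq : ∀ p ∈ S, bal (f p) = Bl p := by
    intro p hp
    have hex : ∃ q, q ∈ S ∧ f q = f p := ⟨p, hp, rfl⟩
    have : bal (f p) = Bl hex.choose := by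
      simp only [hbal]
      rw [dif_pos hex]
    rw [this, hfinj _ hex.choose_spec.1 _ hp hex.choose_spec.2]
  have Sprop : ∀ p ∈ S, p.1.1 ∈ T.verts ∧ p.1.2 ∈ T.verts ∧ T.edge p.1.1 p.1.2 := by
    intro p hp
    have := (Finset.mem_product.mp hp).1
    rw [show p.1 = (p.1.1, p.1.2) from rfl, memE] at this
    exact this
  have hlin : ∀ i ∈ S.image f, IsStrictLinearOrderOn T.verts (bal i) := by
    intro i hi
    obtain ⟨p, hp, rfl⟩ := Finset.mem_image.mp hi
    rw [bal_eq p hp]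
    obtain ⟨h1, h2, h3⟩ := Sprop p hp
    exact mcgB_lin h1 h2 (edge_ne h3) p.2
  refine ⟨⟨S.image f, T.verts, T.verts_nonempty, bal, hlin⟩, rfl, ?_⟩
  · intro x hx y hy
    by_cases hxy : x = y
    · subst hxy
      have hm : Profile.margin ⟨S.image f, T.verts, T.verts_nonempty, bal, hlin⟩ x x = 0 :=
        sub_self _
      rw [hm]
      simp only [lt_self_iff_false, false_iff]
      exact fun h => T.edge_asymm _ _ h h
    · have key : ∀ u w : C,
          (((S.image f).filter (fun v => bal v u w)).card : ℤ) =
            ((S.filter (fun p => Bl p u w)).card : ℤ) := by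
        intro u w
        congr 1
        refine (Finset.card_bij (fun p _ => f p) ?_ ?_ ?_).symm
        · intro p hp
          have hp' := Finset.mem_filter.mp hp
          rw [Finset.mem_filter]
          exact ⟨Finset.mem_image_of_mem f hp'.1, by rw [bal_eq p hp'.1]; exact hp'.2⟩
        · intro p hp q hq h
          exact hfinj _ (Finset.mem_filter.mp hp).1 _ (Finset.mem_filter.mp hq).1 h
        · intro v hv
          obtain ⟨hv1, hv2⟩ := Finset.mem_filter.mp hv
          obtain ⟨p, hp, rfl⟩ := Finset.mem_image.mp hv1
          rw [bal_eq p hp] at hv2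
          exact ⟨p, Finset.mem_filter.mpr ⟨hp, hv2⟩, rfl⟩
      have hm : Profile.margin ⟨S.image f, T.verts, T.verts_nonempty, bal, hlin⟩ x y =
          ∑ p ∈ S, ((if Bl p x y then (1 : ℤ) else 0) - (if Bl p y x then 1 else 0)) := by
        rw [Finset.sum_sub_distrib, Finset.sum_boole, Finset.sum_boole]
        show (((S.image f).filter (fun v => bal v x y)).card : ℤ) -
            (((S.image f).filter (fun v => bal v y x)).card : ℤ) = _
        rw [key, key]
      rw [hm, hS, Finset.sum_product]
      have step : ∀ e ∈ E,
          (∑ v : Bool, ((if Bl (e, v) x y then (1 : ℤ) else 0) -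
            (if Bl (e, v) y x then 1 else 0))) =
          (if e = (x, y) then (2 : ℤ) else 0) + (if e = (y, x) then -2 else 0) := by
        intro e he
        obtain ⟨h1, h2, h3⟩ := Sprop (e, true) (Finset.mem_product.mpr ⟨he, Finset.mem_univ _⟩)
        have := mcgB_contrib (s := T.verts) (x := x) (y := y) h1 h2 (edge_ne h3) hxy
        simp only [hBl] at this ⊢
        rw [this]
        have hee : (e.1, e.2) = e := rfl
        rw [hee]
        by_cases g1 : e = (x, y)
        · rw [if_pos g1, if_pos g1,
            if_neg (fun g2 => hxy (Prod.ext_iff.mp (g1.symm.trans g2)).1)]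
          norm_num
        · rw [if_neg g1, if_neg g1]
          by_cases g2 : e = (y, x) <;> simp [g2]
      rw [Finset.sum_congr rfl step, Finset.sum_add_distrib,
        Finset.sum_ite_eq' E (x, y), Finset.sum_ite_eq' E (y, x)]
      by_cases hE1 : T.edge x y
      · rw [if_pos ((memE x y).mpr ⟨hx, hy, hE1⟩),
          if_neg (fun h => T.edge_asymm _ _ hE1 ((memE y x).mp h).2.2)]
        simp [hE1]
      · rw [if_neg (fun h => hE1 ((memE x y).mp h).2.2)]
        simp only [zero_add, hE1, iff_false, not_lt]
        split_ifs <;> norm_num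
end
end

section
/- (Debord) If 𝒯 = (T, w) is a weighted weak tournament in which all weights have the same parity, and this parity is even if T is not a tournament, then 𝒯 is the margin graph of a profile: there exists a profile P with X(P) = X(𝒯) such that ℳ(P) = 𝒯. -/
/- Formalization of voting-theoretic notions from Holliday, Norman, Pacuit, Zahedian,
"Impossibility theorems involving weakenings of expansion consistency and resoluteness
in voting". Candidates form an infinite type `C` and voters an infinite type `V`. -/

open Classical

noncomputable section

/-- A weighted weak tournament: an asymmetric directed graph on a finite nonempty set
of vertices, with a positive integer weight on each edge. -/
structure WeightedWeakTournament (C : Type) where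
  verts : Finset C
  verts_nonempty : verts.Nonempty
  edge : C → C → Prop
  edge_asymm : ∀ x y, edge x y → ¬ edge y x
  edge_dom : ∀ x y, edge x y → x ∈ verts ∧ y ∈ verts
  wt : C → C → ℤ
  wt_pos : ∀ x y, edge x y → 0 < wt x y

/-- `T` is a tournament: any two distinct vertices are related by an edge. -/
def WeightedWeakTournament.IsTournament {C : Type} (T : WeightedWeakTournament C) : Prop :=
  ∀ a ∈ T.verts, ∀ b ∈ T.verts, a ≠ b → T.edge a b ∨ T.edge b a

/- Debord's theorem via McGarvey's construction. A voter with ballot `L` adds `±1` to the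
margin of every pair of distinct candidates, and the two ballots `x y c₁ … cₖ` and
`cₖ … c₁ x y` together add `2` to the margin of `x` over `y` and cancel on every other pair.
Adding such pairs of ballots realizes every skew-symmetric function with even values. If all
weights are odd, then `T` is a tournament, so all margins off the diagonal are odd and one
arbitrary ballot reduces this case to the even one. -/

section BallotMargins

variable {C : Type}

def ballotMargin (L : C → C → Prop) (a b : C) : ℤ :=
  (if L a b then 1 else 0) - (if L b a then 1 else 0)

def edgeMargin (x y a b : C) : ℤ :=
  (if a = x ∧ b = y then 1 else 0) - (if b = x ∧ a = y then 1 else 0)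

theorem ballotMargin_swap (L : C → C → Prop) (a b : C) :
    ballotMargin L b a = -ballotMargin L a b := by
  unfold ballotMargin; ring

theorem IsStrictLinearOrderOn.ballotMargin_eq_zero {s : Finset C} {L : C → C → Prop}
    (hL : IsStrictLinearOrderOn s L) {a b : C} (hab : ¬(a ∈ s ∧ b ∈ s)) :
    ballotMargin L a b = 0 := by
  have hdom := hL.2.2.2
  have h₁ : ¬L a b := fun h => hab (hdom a b h)
  have h₂ : ¬L b a := fun h => hab (hdom b a h).symm
  simp [ballotMargin, h₁, h₂]

theorem IsStrictLinearOrderOn.odd_ballotMargin {s : Finset C} {L : C → C → Prop}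
    (hL : IsStrictLinearOrderOn s L) {a b : C} (ha : a ∈ s) (hb : b ∈ s) (hab : a ≠ b) :
    Odd (ballotMargin L a b) := by
  obtain ⟨hirr, htrans, htot, -⟩ := hL
  have hasymm : ¬(L a b ∧ L b a) := fun h => hirr a (htrans a b a h.1 h.2)
  rcases htot a ha b hb hab with h | h <;> simp_all [ballotMargin]

def rankOrder (s : Finset C) (r : C → ℤ) (a b : C) : Prop :=
  a ∈ s ∧ b ∈ s ∧ r a < r b

theorem isStrictLinearOrderOn_rankOrder {s : Finset C} {r : C → ℤ} (hr : Set.InjOn r s) :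
    IsStrictLinearOrderOn s (rankOrder s r) := by
  refine ⟨fun a h => h.2.2.false, fun a b c hab hbc => ⟨hab.1, hbc.2.1, hab.2.2.trans hbc.2.2⟩,
    fun a ha b hb hab => ?_, fun a b h => ⟨h.1, h.2.1⟩⟩
  rcases lt_or_gt_of_ne fun h => hab (hr ha hb h) with h | h
  · exact Or.inl ⟨ha, hb, h⟩
  · exact Or.inr ⟨hb, ha, h⟩

theorem Finset.exists_nonneg_injOn (s : Finset C) :
    ∃ r : C → ℤ, (∀ c, 0 ≤ r c) ∧ Set.InjOn r s := by
  obtain ⟨r, hr⟩ := Set.countable_iff_exists_injOn.mp s.countable_toSet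
  exact ⟨fun c => r c, fun c => by positivity, fun a ha b hb h => hr ha hb (by simpa using h)⟩

theorem exists_ballots_edgeMargin {s : Finset C} {x y : C} (hx : x ∈ s) (hy : y ∈ s) :
    ∃ L₁ L₂ : C → C → Prop, IsStrictLinearOrderOn s L₁ ∧ IsStrictLinearOrderOn s L₂ ∧
      ∀ a b, ballotMargin L₁ a b + ballotMargin L₂ a b = 2 * edgeMargin x y a b := by
  obtain ⟨r, hr0, hr⟩ := s.exists_nonneg_injOn
  let r₁ : C → ℤ := fun c => if c = x then 0 else if c = y then 1 else r c + 2
  let r₂ : C → ℤ := fun c => if c = x then 0 else if c = y then 1 else -r c - 1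
  have hinj₁ : Set.InjOn r₁ s := by
    intro a ha b hb h
    have := hr0 a; have := hr0 b
    simp only [r₁] at h
    split_ifs at h <;> first | omega | (subst_vars; rfl) | exact hr ha hb (by omega)
  have hinj₂ : Set.InjOn r₂ s := by
    intro a ha b hb h
    have := hr0 a; have := hr0 b
    simp only [r₂] at h
    split_ifs at h <;> first | omega | (subst_vars; rfl) | exact hr ha hb (by omega)
  refine ⟨rankOrder s r₁, rankOrder s r₂, isStrictLinearOrderOn_rankOrder hinj₁,
    isStrictLinearOrderOn_rankOrder hinj₂, fun a b => ?_⟩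
  have := hr0 a; have := hr0 b
  by_cases hs : a ∈ s ∧ b ∈ s
  · simp only [ballotMargin, edgeMargin, rankOrder, hs.1, hs.2, true_and, r₁, r₂]
    split_ifs <;> first | omega | simp_all
  · have h₁ := (isStrictLinearOrderOn_rankOrder hinj₁).ballotMargin_eq_zero hs
    have h₂ := (isStrictLinearOrderOn_rankOrder hinj₂).ballotMargin_eq_zero hs
    have h₃ : ¬(a = x ∧ b = y) := fun h => hs ⟨h.1 ▸ hx, h.2 ▸ hy⟩
    have h₄ : ¬(b = x ∧ a = y) := fun h => hs ⟨h.2 ▸ hy, h.1 ▸ hx⟩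
    rw [h₁, h₂]
    simp [edgeMargin, h₃, h₄]

theorem eq_sum_pos_mul_edgeMargin {s : Finset C} {d : C → C → ℤ}
    (hskew : ∀ a b, d b a = -d a b) (hsupp : ∀ a b, d a b ≠ 0 → a ∈ s ∧ b ∈ s)
    (a b : C) :
    d a b = ∑ p ∈ (s ×ˢ s).filter (fun p => 0 < d p.1 p.2),
      d p.1 p.2 * edgeMargin p.1 p.2 a b := by
  have hcoord : ∀ a b, ∑ p ∈ (s ×ˢ s).filter (fun p => 0 < d p.1 p.2),
      d p.1 p.2 * (if a = p.1 ∧ b = p.2 then 1 else 0) = if 0 < d a b then d a b else 0 := by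
    intro a b
    have hpair : ∀ p : C × C, (a = p.1 ∧ b = p.2) ↔ (a, b) = p := fun p =>
      ⟨fun h => Prod.ext h.1 h.2, fun h => h ▸ ⟨rfl, rfl⟩⟩
    simp_rw [mul_ite, mul_one, mul_zero, hpair, Finset.sum_ite_eq, Finset.mem_filter,
      Finset.mem_product]
    by_cases h : 0 < d a b
    · simp [h, hsupp a b h.ne']
    · simp [h]
  simp only [edgeMargin, mul_sub, Finset.sum_sub_distrib]
  rw [hcoord a b, hcoord b a, hskew]
  split_ifs <;> omega

end BallotMargins

namespace Profile

variable {C V : Type}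

def addVoter (P : Profile C V) (v : V) (L : C → C → Prop)
    (hL : IsStrictLinearOrderOn P.cands L) : Profile C V where
  voters := insert v P.voters
  cands := P.cands
  cands_nonempty := P.cands_nonempty
  ballot := Function.update P.ballot v L
  ballot_lin i hi := by
    by_cases h : i = v
    · subst h; simpa using hL
    · simpa [h] using P.ballot_lin i (by simpa [h] using hi)

theorem card_filter_ballot_addVoter (P : Profile C V) {v : V} {L : C → C → Prop}
    (hL : IsStrictLinearOrderOn P.cands L) (hv : v ∉ P.voters) (a b : C) :
    (((P.addVoter v L hL).voters.filter fun i => (P.addVoter v L hL).ballot i a b).card : ℤ) =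
      (P.voters.filter fun i => P.ballot i a b).card + if L a b then 1 else 0 := by
  show (((insert v P.voters).filter fun i => Function.update P.ballot v L i a b).card : ℤ) = _
  have hfilter : (P.voters.filter fun i => Function.update P.ballot v L i a b) =
      P.voters.filter fun i => P.ballot i a b :=
    Finset.filter_congr fun i hi => by rw [Function.update_of_ne (ne_of_mem_of_not_mem hi hv)]
  rw [Finset.filter_insert, Function.update_self, hfilter]
  split_ifs with h
  · rw [Finset.card_insert_of_notMem fun hmem => hv (Finset.mem_of_mem_filter _ hmem)]
    push_cast; ring
  · simp

theorem margin_addVoter (P : Profile C V) {v : V} {L : C → C → Prop}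
    (hL : IsStrictLinearOrderOn P.cands L) (hv : v ∉ P.voters) (a b : C) :
    (P.addVoter v L hL).margin a b = P.margin a b + ballotMargin L a b := by
  rw [margin, card_filter_ballot_addVoter P hL hv, card_filter_ballot_addVoter P hL hv, margin,
    ballotMargin]
  ring

end Profile

section Realizability

variable {C : Type} (V : Type)

def MarginRealizable (s : Finset C) (f : C → C → ℤ) : Prop :=
  ∃ P : Profile C V, P.cands = s ∧ ∀ a b, P.margin a b = f a b

variable {V} {s : Finset C} {f g : C → C → ℤ}

theorem MarginRealizable.congr (hf : MarginRealizable V s f) (hfg : ∀ a b, f a b = g a b) :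
    MarginRealizable V s g := by
  obtain ⟨P, hP, hm⟩ := hf
  exact ⟨P, hP, fun a b => (hm a b).trans (hfg a b)⟩

theorem marginRealizable_zero (hs : s.Nonempty) : MarginRealizable V s fun _ _ => 0 :=
  ⟨⟨∅, s, hs, fun _ _ _ => False, by simp⟩, rfl, fun a b => by simp [Profile.margin]⟩

variable [Infinite V]

theorem MarginRealizable.add_ballotMargin (hf : MarginRealizable V s f) {L : C → C → Prop}
    (hL : IsStrictLinearOrderOn s L) :
    MarginRealizable V s fun a b => f a b + ballotMargin L a b := by
  obtain ⟨P, rfl, hm⟩ := hf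
  obtain ⟨v, hv⟩ := Infinite.exists_notMem_finset P.voters
  exact ⟨P.addVoter v L hL, rfl, fun a b => by rw [P.margin_addVoter hL hv, hm]⟩

theorem MarginRealizable.add_mul_edgeMargin (hf : MarginRealizable V s f) {x y : C} (hx : x ∈ s)
    (hy : y ∈ s) (n : ℕ) :
    MarginRealizable V s fun a b => f a b + 2 * n * edgeMargin x y a b := by
  induction n with
  | zero => simpa using hf
  | succ n ih =>
    obtain ⟨L₁, L₂, hL₁, hL₂, hL⟩ := exists_ballots_edgeMargin hx hy
    refine ((ih.add_ballotMargin hL₁).add_ballotMargin hL₂).congr fun a b => ?_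
    rw [add_assoc _ (ballotMargin L₁ a b), hL]
    push_cast; ring

theorem MarginRealizable.add_sum_mul_edgeMargin (hf : MarginRealizable V s f)
    (F : Finset (C × C)) (hF : ∀ p ∈ F, p.1 ∈ s ∧ p.2 ∈ s) (n : C × C → ℕ) :
    MarginRealizable V s fun a b => f a b + ∑ p ∈ F, 2 * n p * edgeMargin p.1 p.2 a b := by
  induction F using Finset.induction_on with
  | empty => simpa using hf
  | insert p F hp ih =>
    have hpF := hF p (Finset.mem_insert_self p F)
    refine ((ih fun q hq => hF q (Finset.mem_insert_of_mem hq)).add_mul_edgeMargin hpF.1 hpF.2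
      (n p)).congr fun a b => ?_
    rw [Finset.sum_insert hp]
    ring

variable {d : C → C → ℤ}

theorem marginRealizable_of_even (hs : s.Nonempty) (hskew : ∀ a b, d b a = -d a b)
    (hsupp : ∀ a b, d a b ≠ 0 → a ∈ s ∧ b ∈ s) (heven : ∀ a b, Even (d a b)) :
    MarginRealizable V s d := by
  refine ((marginRealizable_zero hs).add_sum_mul_edgeMargin
    ((s ×ˢ s).filter fun p => 0 < d p.1 p.2)
    (fun p hp => Finset.mem_product.mp (Finset.mem_filter.mp hp).1)
    fun p => (d p.1 p.2 / 2).toNat).congr fun a b => ?_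
  rw [eq_sum_pos_mul_edgeMargin hskew hsupp a b, zero_add]
  refine Finset.sum_congr rfl fun p hp => ?_
  have hpos := (Finset.mem_filter.mp hp).2
  obtain ⟨k, hk⟩ := heven p.1 p.2
  rw [hk] at hpos ⊢
  congr 1
  omega

theorem marginRealizable_of_odd (hs : s.Nonempty) (hskew : ∀ a b, d b a = -d a b)
    (hsupp : ∀ a b, d a b ≠ 0 → a ∈ s ∧ b ∈ s)
    (hodd : ∀ a ∈ s, ∀ b ∈ s, a ≠ b → Odd (d a b)) :
    MarginRealizable V s d := by
  obtain ⟨r, -, hr⟩ := s.exists_nonneg_injOn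
  have hL := isStrictLinearOrderOn_rankOrder hr
  have hzero : ∀ a b, ¬(a ∈ s ∧ b ∈ s) → d a b = 0 := fun a b h =>
    by_contra fun h' => h (hsupp a b h')
  have hdiff : MarginRealizable V s fun a b => d a b - ballotMargin (rankOrder s r) a b := by
    refine marginRealizable_of_even hs (fun a b => ?_) (fun a b h => ?_) (fun a b => ?_)
    · rw [hskew, ballotMargin_swap]
      ring
    · by_contra hab
      simp [hzero a b hab, hL.ballotMargin_eq_zero hab] at h
    · by_cases hab : a ∈ s ∧ b ∈ s
      · rcases eq_or_ne a b with rfl | hne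
        · have := hskew a a
          have := ballotMargin_swap (rankOrder s r) a a
          simp only [show d a a = 0 by omega,
            show ballotMargin (rankOrder s r) a a = 0 by omega, sub_zero, Even.zero]
        · exact (hodd a hab.1 b hab.2 hne).sub_odd (hL.odd_ballotMargin hab.1 hab.2 hne)
      · simp [hzero a b hab, hL.ballotMargin_eq_zero hab]
  exact (hdiff.add_ballotMargin hL).congr fun a b => by ring

end Realizability

namespace WeightedWeakTournament

variable {C : Type} (T : WeightedWeakTournament C)

def signedWt (a b : C) : ℤ :=
  if T.edge a b then T.wt a b else if T.edge b a then -T.wt b a else 0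

theorem signedWt_swap (a b : C) : T.signedWt b a = -T.signedWt a b := by
  unfold signedWt
  by_cases hab : T.edge a b
  · simp [hab, T.edge_asymm a b hab]
  · by_cases hba : T.edge b a <;> simp [hab, hba]

theorem mem_verts_of_signedWt_ne_zero (a b : C) (h : T.signedWt a b ≠ 0) :
    a ∈ T.verts ∧ b ∈ T.verts := by
  unfold signedWt at h
  split_ifs at h with hab hba
  · exact T.edge_dom a b hab
  · exact (T.edge_dom b a hba).symm
  · exact absurd rfl h

theorem signedWt_of_edge {a b : C} (h : T.edge a b) : T.signedWt a b = T.wt a b :=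
  if_pos h

theorem signedWt_pos_iff {a b : C} : 0 < T.signedWt a b ↔ T.edge a b := by
  unfold signedWt
  split_ifs with hab hba
  · exact iff_of_true (T.wt_pos a b hab) hab
  · exact iff_of_false (by have := T.wt_pos b a hba; omega) hab
  · exact iff_of_false (lt_irrefl 0) hab

theorem even_signedWt (h : ∀ a b, T.edge a b → Even (T.wt a b)) (a b : C) :
    Even (T.signedWt a b) := by
  unfold signedWt
  split_ifs with hab hba
  · exact h a b hab
  · exact (h b a hba).neg
  · exact Even.zero

theorem odd_signedWt (ht : T.IsTournament) (h : ∀ a b, T.edge a b → Odd (T.wt a b)) :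
    ∀ a ∈ T.verts, ∀ b ∈ T.verts, a ≠ b → Odd (T.signedWt a b) := by
  intro a ha b hb hne
  unfold signedWt
  split_ifs with hab hba
  · exact h a b hab
  · exact (h b a hba).neg
  · exact ((ht a ha b hb hne).elim hab hba).elim

end WeightedWeakTournament

theorem debord_general (C V : Type) [Infinite V] (T : WeightedWeakTournament C)
    (hpar : ∀ x y u v, T.edge x y → T.edge u v → T.wt x y % 2 = T.wt u v % 2)
    (heven : ¬ T.IsTournament → ∀ x y, T.edge x y → T.wt x y % 2 = 0) :
    ∃ P : Profile C V, P.cands = T.verts ∧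
      ∀ x ∈ T.verts, ∀ y ∈ T.verts,
        (0 < P.margin x y ↔ T.edge x y) ∧ (T.edge x y → P.margin x y = T.wt x y) := by
  obtain ⟨P, hP, hmargin⟩ : MarginRealizable V T.verts T.signedWt := by
    by_cases hodd : ∃ x₀ y₀, T.edge x₀ y₀ ∧ Odd (T.wt x₀ y₀)
    · obtain ⟨x₀, y₀, he₀, ho₀⟩ := hodd
      have htour : T.IsTournament := by
        by_contra hnt
        exact Int.not_even_iff_odd.mpr ho₀ (Int.even_iff.mpr (heven hnt x₀ y₀ he₀))
      refine marginRealizable_of_odd T.verts_nonempty T.signedWt_swap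
        T.mem_verts_of_signedWt_ne_zero (T.odd_signedWt htour fun x y he => ?_)
      exact Int.odd_iff.mpr ((hpar x y x₀ y₀ he he₀).trans (Int.odd_iff.mp ho₀))
    · push Not at hodd
      exact marginRealizable_of_even T.verts_nonempty T.signedWt_swap
        T.mem_verts_of_signedWt_ne_zero
        (T.even_signedWt fun x y he => Int.not_odd_iff_even.mp (hodd x y he))
  refine ⟨P, hP, fun x _ y _ => ⟨?_, fun he => ?_⟩⟩
  · rw [hmargin]
    exact T.signedWt_pos_iff
  · rw [hmargin, T.signedWt_of_edge he]

/-- **Debord.** If all weights of a weighted weak tournament have the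
same parity, which is even if the underlying graph is not a tournament, then it is
the margin graph of a profile. -/
theorem debord (C V : Type) [Infinite C] [Infinite V] (T : WeightedWeakTournament C)
    (hpar : ∀ x y u v, T.edge x y → T.edge u v → T.wt x y % 2 = T.wt u v % 2)
    (heven : ¬ T.IsTournament → ∀ x y, T.edge x y → T.wt x y % 2 = 0) :
    ∃ P : Profile C V, P.cands = T.verts ∧
      ∀ x ∈ T.verts, ∀ y ∈ T.verts,
        (0 < P.margin x y ↔ T.edge x y) ∧ (T.edge x y → P.margin x y = T.wt x y) :=
  debord_general C V T hpar heven
end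
end
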